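/- arXiv:2512.22940 — 8 statements merged into one kernel-verified Lean document; each statement's English description precedes it below -/
import Mathlib

section
/- Let $I = \bigcap_{j=1}^r \langle x_i^{w_{j,i}} : i \in A_j \rangle$ be a monomial ideal without embedded associated primes and with minimal irreducible decomposition, and suppose $w_{j,i} = w_{k,i}$ whenever $i \in A_j \cap A_k$ (i.e., the weight of each variable is independent of the component). Setting $w_i = w_{j,i}$ for any $j$ with $i \in A_j$, the standard linear weighting $w = (w_1,\dots,w_n)$ satisfies $I = J_w$ where $J = \sqrt{I} = \bigcap_{j=1}^r \langle x_i : i \in A_j \rangle$. -/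
open MvPolynomial Finset

/-- The monomial `x^a` in `K[x_1,…,x_n]`. -/
noncomputable def mon {K : Type*} [Field K] {n : ℕ} (a : Fin n → ℕ) :
    MvPolynomial (Fin n) K :=
  MvPolynomial.monomial (Finsupp.equivFunOnFinite.symm a) 1

/-- `α(L)`: the least total degree of a nonzero monomial of `L`. -/
noncomputable def alphaI {K σ : Type*} [Field K] (L : Ideal (MvPolynomial σ K)) : ℕ :=
  sInf {d : ℕ | ∃ m : σ →₀ ℕ, (m.sum fun _ e => e) = d ∧ MvPolynomial.monomial m (1 : K) ∈ L}

/-- The weighted ideal `I_w`, generated by `x^{w(a)}` for monomials `x^a ∈ I`. -/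
noncomputable def wIdeal {K : Type*} [Field K] {n : ℕ} (w : Fin n → ℕ)
    (I : Ideal (MvPolynomial (Fin n) K)) : Ideal (MvPolynomial (Fin n) K) :=
  Ideal.span {f | ∃ a : Fin n → ℕ, mon (K := K) a ∈ I ∧ f = mon (K := K) (fun i => w i * a i)}

/-- The irreducible monomial ideal `⟨x_i^{w i} : i ∈ A⟩`. -/
noncomputable def qIdeal {K : Type*} [Field K] {n : ℕ} (A : Finset (Fin n)) (w : Fin n → ℕ) :
    Ideal (MvPolynomial (Fin n) K) :=
  Ideal.span ((fun i => (X i : MvPolynomial (Fin n) K) ^ w i) '' ↑A)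

/-- `I` is a monomial ideal. -/
def IsMonomialIdeal {K : Type*} [Field K] {n : ℕ} (I : Ideal (MvPolynomial (Fin n) K)) : Prop :=
  ∃ S : Set (Fin n → ℕ), I = Ideal.span ((mon (K := K)) '' S)

/-- The `s`-th symbolic power `I^{(s)} = ⋂_{p ∈ Ass(I)} (I^s R_p ∩ R)`. -/
noncomputable def symbPow {R : Type*} [CommRing R] (I : Ideal R) (s : ℕ) : Ideal R :=
  ⨅ p : {p : Ideal R // p ∈ associatedPrimes R (R ⧸ I)},
    letI : p.1.IsPrime := p.2.isPrime
    Ideal.comap (algebraMap R (Localization.AtPrime p.1))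
      (Ideal.map (algebraMap R (Localization.AtPrime p.1)) (I ^ s))



namespace Helper4
variable {K : Type*} [Field K] {n : ℕ}

/-- The substitution sending `X i ↦ 0` for `i ∈ A` and fixing the other variables. -/
noncomputable def phi (A : Finset (Fin n)) : MvPolynomial (Fin n) K →ₐ[K] MvPolynomial (Fin n) K :=
  aeval (fun i => if i ∈ A then 0 else X i)

lemma phi_monomial_of_disjoint (A : Finset (Fin n)) (m : Fin n →₀ ℕ) (c : K)
    (h : ∀ i ∈ A, m i = 0) : phi (K := K) A (monomial m c) = monomial m c := by
  rw [phi, aeval_monomial, monomial_eq, algebraMap_eq]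
  congr 1
  apply Finsupp.prod_congr
  intro i hi
  have hiA : i ∉ A := fun hA => Finsupp.mem_support_iff.mp hi (h i hA)
  simp [hiA]

lemma phi_monomial_of_mem (A : Finset (Fin n)) (m : Fin n →₀ ℕ) (c : K)
    {i : Fin n} (hiA : i ∈ A) (hi : m i ≠ 0) : phi (K := K) A (monomial m c) = 0 := by
  rw [phi, aeval_monomial]
  have : (m.prod fun i e => (if i ∈ A then (0 : MvPolynomial (Fin n) K) else X i) ^ e) = 0 := by
    refine Finset.prod_eq_zero (Finsupp.mem_support_iff.mpr hi) ?_
    simp [hiA, zero_pow hi]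
  rw [this, mul_zero]

lemma coeff_phi (A : Finset (Fin n)) (f : MvPolynomial (Fin n) K) (m : Fin n →₀ ℕ)
    (hm : ∀ i ∈ A, m i = 0) : coeff m (phi (K := K) A f) = coeff m f := by
  conv_lhs => rw [f.as_sum, map_sum]
  rw [coeff_sum, Finset.sum_eq_single m]
  · rw [phi_monomial_of_disjoint A m _ hm, coeff_monomial, if_pos rfl]
  · intro b _ hbm
    by_cases hcond : ∀ i ∈ A, b i = 0
    · rw [phi_monomial_of_disjoint A b _ hcond, coeff_monomial, if_neg hbm]
    · push_neg at hcond
      obtain ⟨i, hiA, hib⟩ := hcond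
      rw [phi_monomial_of_mem A b _ hiA hib, coeff_zero]
  · intro h
    rw [notMem_support_iff.mp h, monomial_zero, map_zero, coeff_zero]

lemma mem_span_X_iff_phi (A : Finset (Fin n)) (f : MvPolynomial (Fin n) K) :
    f ∈ Ideal.span (X '' ↑A : Set (MvPolynomial (Fin n) K)) ↔ phi (K := K) A f = 0 := by
  constructor
  · intro hf
    have : Ideal.span (X '' ↑A : Set (MvPolynomial (Fin n) K)) ≤
        RingHom.ker (phi (K := K) A).toRingHom := by
      rw [Ideal.span_le]
      rintro - ⟨i, hiA, rfl⟩
      simp only [SetLike.mem_coe, RingHom.mem_ker, AlgHom.toRingHom_eq_coe, RingHom.coe_coe]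
      simp [phi, Finset.mem_coe.mp hiA]
    exact this hf
  · intro hf
    rw [mem_ideal_span_X_image]
    intro m hm
    by_contra hc
    push_neg at hc
    have := coeff_phi A f m hc
    rw [hf, coeff_zero] at this
    exact mem_support_iff.mp hm this.symm

lemma mem_qIdeal_iff (A : Finset (Fin n)) (w : Fin n → ℕ) (f : MvPolynomial (Fin n) K) :
    f ∈ qIdeal (K := K) A w ↔ ∀ m ∈ f.support, ∃ i ∈ A, w i ≤ m i := by
  have himg : ((fun i => (X i : MvPolynomial (Fin n) K) ^ w i) '' ↑A)
      = (fun s => monomial s (1 : K)) '' ((fun i => Finsupp.single i (w i)) '' ↑A) := by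
    rw [Set.image_image]
    exact congrArg (· '' (↑A : Set (Fin n))) (funext fun i => X_pow_eq_monomial)
  rw [qIdeal, himg, mem_ideal_span_monomial_image]
  simp [Finsupp.single_le_iff]

lemma mon_support (a : Fin n → ℕ) :
    (mon (K := K) a).support = {Finsupp.equivFunOnFinite.symm a} := by
  classical
  rw [mon, support_monomial, if_neg one_ne_zero]

lemma mon_mem_qIdeal_iff (A : Finset (Fin n)) (w : Fin n → ℕ) (a : Fin n → ℕ) :
    mon (K := K) a ∈ qIdeal (K := K) A w ↔ ∃ i ∈ A, w i ≤ a i := by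
  rw [mem_qIdeal_iff, mon_support]
  simp only [Finset.mem_singleton, forall_eq]
  rfl

lemma mem_wIdeal_iff (vv : Fin n → ℕ) (I : Ideal (MvPolynomial (Fin n) K))
    (f : MvPolynomial (Fin n) K) :
    f ∈ wIdeal (K := K) vv I ↔
      ∀ m ∈ f.support, ∃ a : Fin n → ℕ, mon (K := K) a ∈ I ∧ ∀ i, vv i * a i ≤ m i := by
  have hset : {g | ∃ a : Fin n → ℕ, mon (K := K) a ∈ I ∧ g = mon (K := K) (fun i => vv i * a i)}
      = (fun s => monomial s (1 : K)) ''
        {b : Fin n →₀ ℕ | ∃ a : Fin n → ℕ, mon (K := K) a ∈ I ∧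
          b = Finsupp.equivFunOnFinite.symm (fun i => vv i * a i)} := by
    ext g
    constructor
    · rintro ⟨a, ha, rfl⟩
      exact ⟨Finsupp.equivFunOnFinite.symm (fun i => vv i * a i), ⟨a, ha, rfl⟩, rfl⟩
    · rintro ⟨b, ⟨a, ha, rfl⟩, rfl⟩
      exact ⟨a, ha, rfl⟩
  rw [wIdeal, hset, mem_ideal_span_monomial_image]
  apply forall₂_congr
  intro m _
  constructor
  · rintro ⟨b, ⟨a, ha, rfl⟩, hle⟩
    exact ⟨a, ha, fun i => hle i⟩
  · rintro ⟨a, ha, hle⟩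
    exact ⟨_, ⟨a, ha, rfl⟩, fun i => hle i⟩

lemma qIdeal_one (A : Finset (Fin n)) :
    qIdeal (K := K) A (fun _ => 1) = Ideal.span (X '' ↑A : Set (MvPolynomial (Fin n) K)) := by
  rw [qIdeal]
  exact congrArg Ideal.span (congrArg (· '' (↑A : Set (Fin n))) (funext fun i => pow_one _))

lemma radical_qIdeal (A : Finset (Fin n)) (u : Fin n → ℕ) (hu : ∀ i ∈ A, 0 < u i) :
    (qIdeal (K := K) A u).radical = qIdeal (K := K) A (fun _ => 1) := by
  rw [qIdeal_one]
  apply le_antisymm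
  · intro f hf
    obtain ⟨k, hk⟩ := Ideal.mem_radical_iff.mp hf
    have hQP : qIdeal (K := K) A u ≤ Ideal.span (X '' ↑A) := by
      rw [qIdeal, Ideal.span_le]
      rintro - ⟨i, hiA, rfl⟩
      have hXi : (X i : MvPolynomial (Fin n) K) ∈ Ideal.span (X '' ↑A) :=
        Ideal.subset_span (Set.mem_image_of_mem _ hiA)
      exact Ideal.pow_mem_of_mem _ hXi _ (hu i (Finset.mem_coe.mp hiA))
    have h0 : phi (K := K) A f ^ k = 0 := by
      rw [← map_pow]
      exact (mem_span_X_iff_phi A _).mp (hQP hk)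
    rcases Nat.eq_zero_or_pos k with hk0 | hk0
    · subst hk0
      exact absurd (by simp at h0) id
    · rw [mem_span_X_iff_phi]
      exact (pow_eq_zero_iff hk0.ne').mp h0
  · rw [Ideal.span_le]
    rintro - ⟨i, hiA, rfl⟩
    exact Ideal.mem_radical_iff.mpr ⟨u i, Ideal.subset_span (Set.mem_image_of_mem _ hiA)⟩

end Helper4

/-- if the weights are independent of the component, then
`I = J_w` where `J = √I` is the intersection of the monomial primes. -/
theorem eq_weighted_of_consistent_weights {K : Type*} [Field K] {n r : ℕ}
    (A : Fin r → Finset (Fin n)) (w : Fin r → Fin n → ℕ)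
    (hApos : ∀ j, (A j).Nonempty)
    (hwpos : ∀ j, ∀ i ∈ A j, 0 < w j i)
    (hnoemb : ∀ j k, A j ⊆ A k → j = k)
    (hcons : ∀ j k, ∀ i ∈ A j, i ∈ A k → w j i = w k i)
    (v : Fin n → ℕ) (hvpos : ∀ i, 0 < v i)
    (hv : ∀ j, ∀ i ∈ A j, v i = w j i) :
    (⨅ j, qIdeal (K := K) (A j) (fun _ => 1)) =
        (⨅ j, qIdeal (K := K) (A j) (w j)).radical ∧
      (⨅ j, qIdeal (K := K) (A j) (w j)) =
        wIdeal v (⨅ j, qIdeal (K := K) (A j) (fun _ => 1)) := by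
  have hrad : ∀ j, (qIdeal (K := K) (A j) (w j)).radical
      = qIdeal (K := K) (A j) (fun _ => 1) :=
    fun j => Helper4.radical_qIdeal (A j) (w j) (hwpos j)
  have h1 : ∀ (Q : Fin r → Ideal (MvPolynomial (Fin n) K)),
      (⨅ j, Q j).radical = ⨅ j, (Q j).radical := by
    intro Q
    have e1 : (⨅ j, Q j) = Finset.univ.inf Q := by
      rw [Finset.inf_eq_iInf]; simp
    have e2 : (⨅ j, (Q j).radical) = Finset.univ.inf (fun j => (Q j).radical) := by
      rw [Finset.inf_eq_iInf]; simp
    rw [e1, e2, ← Ideal.radicalInfTopHom_apply, map_finset_inf]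
    rfl
  have key : ∀ m : Fin n →₀ ℕ,
      (∀ j, ∃ i ∈ A j, w j i ≤ m i) ↔
        (∃ a : Fin n → ℕ, (∀ j, ∃ i ∈ A j, 1 ≤ a i) ∧ ∀ i, v i * a i ≤ m i) := by
    intro m
    constructor
    · intro h
      refine ⟨fun i => m i / v i, fun j => ?_, fun i => ?_⟩
      · obtain ⟨i, hiA, hwi⟩ := h j
        refine ⟨i, hiA, ?_⟩
        rw [Nat.one_le_div_iff (hvpos i), hv j i hiA]
        exact hwi
      · calc v i * (m i / v i) = m i / v i * v i := mul_comm _ _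
          _ ≤ m i := Nat.div_mul_le_self _ _
    · rintro ⟨a, h1a, h2a⟩ j
      obtain ⟨i, hiA, hai⟩ := h1a j
      refine ⟨i, hiA, ?_⟩
      calc w j i = v i := (hv j i hiA).symm
        _ ≤ v i * a i := Nat.le_mul_of_pos_right _ hai
        _ ≤ m i := h2a i
  constructor
  · rw [h1]
    exact iInf_congr fun j => (hrad j).symm
  · ext f
    rw [Submodule.mem_iInf, Helper4.mem_wIdeal_iff]
    simp_rw [Helper4.mem_qIdeal_iff, Submodule.mem_iInf, Helper4.mon_mem_qIdeal_iff]
    constructor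
    · intro h m hm
      exact (key m).mp (fun j => h j m hm)
    · intro h j m hm
      exact (key m).mpr (h m hm) j
end

section
/- Let $w = (w_1,\dots,w_n)$ be a standard linear weighting on $K[x_1,\dots,x_n]$ with all $w_i \in \mathbb{N}_+$, and let $J_1, \dots, J_r$ be monomial ideals. Then $(J_1 \cap \cdots \cap J_r)_w = (J_1)_w \cap \cdots \cap (J_r)_w$. -/
open MvPolynomial Finset

lemma mon_mem_of_le {K : Type*} [Field K] {n : ℕ} {I : Ideal (MvPolynomial (Fin n) K)}
    {a b : Fin n → ℕ} (h : ∀ i, a i ≤ b i) (ha : mon (K := K) a ∈ I) :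
    mon (K := K) b ∈ I := by
  have hAdd : (Finsupp.equivFunOnFinite.symm b : Fin n →₀ ℕ) =
      Finsupp.equivFunOnFinite.symm (fun i => b i - a i) + Finsupp.equivFunOnFinite.symm a := by
    ext i
    simp [Nat.sub_add_cancel (h i)]
  have : mon (K := K) b = mon (K := K) (fun i => b i - a i) * mon (K := K) a := by
    unfold mon
    rw [MvPolynomial.monomial_mul, one_mul, hAdd]
  rw [this]
  exact Ideal.mul_mem_left _ _ ha

lemma wIdeal_eq_span {K : Type*} [Field K] {n : ℕ} (w : Fin n → ℕ)
    (I : Ideal (MvPolynomial (Fin n) K)) :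
    wIdeal w I = Ideal.span ((fun m => MvPolynomial.monomial m (1 : K)) ''
      {m | ∃ a : Fin n → ℕ, mon (K := K) a ∈ I ∧
        m = Finsupp.equivFunOnFinite.symm fun i => w i * a i}) := by
  unfold wIdeal
  congr 1
  ext f
  constructor
  · rintro ⟨a, ha, rfl⟩
    exact ⟨_, ⟨a, ha, rfl⟩, rfl⟩
  · rintro ⟨m, ⟨a, ha, rfl⟩, rfl⟩
    exact ⟨a, ha, rfl⟩

lemma mem_wIdeal_iff {K : Type*} [Field K] {n : ℕ} (w : Fin n → ℕ)
    (I : Ideal (MvPolynomial (Fin n) K)) (f : MvPolynomial (Fin n) K) :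
    f ∈ wIdeal w I ↔ ∀ m ∈ f.support, ∃ a : Fin n → ℕ, mon (K := K) a ∈ I ∧
      (Finsupp.equivFunOnFinite.symm fun i => w i * a i) ≤ m := by
  rw [wIdeal_eq_span, MvPolynomial.mem_ideal_span_monomial_image]
  constructor
  · intro h m hm
    obtain ⟨m', ⟨a, ha, rfl⟩, hle⟩ := h m hm
    exact ⟨a, ha, hle⟩
  · intro h m hm
    obtain ⟨a, ha, hle⟩ := h m hm
    exact ⟨_, ⟨a, ha, rfl⟩, hle⟩

/-- standard linear weighting commutes with intersections of monomial ideals. -/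
theorem wIdeal_iInf {K : Type*} [Field K] {n r : ℕ}
    (w : Fin n → ℕ) (hw : ∀ i, 0 < w i)
    (J : Fin r → Ideal (MvPolynomial (Fin n) K))
    (hJ : ∀ j, IsMonomialIdeal (J j)) :
    wIdeal w (⨅ j, J j) = ⨅ j, wIdeal w (J j) := by
  apply le_antisymm
  · refine le_iInf fun j => Ideal.span_mono ?_
    rintro f ⟨a, ha, rfl⟩
    exact ⟨a, Ideal.mem_iInf.mp ha j, rfl⟩
  · intro f hf
    rw [mem_wIdeal_iff]
    intro m hm
    refine ⟨fun i => m i / w i, ?_, ?_⟩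
    · rw [Ideal.mem_iInf]
      intro j
      have hfj : f ∈ wIdeal w (J j) := Ideal.mem_iInf.mp hf j
      rw [mem_wIdeal_iff] at hfj
      obtain ⟨a, ha, hle⟩ := hfj m hm
      refine mon_mem_of_le (fun i => ?_) ha
      have : w i * a i ≤ m i := by
        have := hle i
        simpa using this
      exact (Nat.le_div_iff_mul_le (hw i)).mpr (by rw [mul_comm]; exact this)
    · rw [Finsupp.le_def]
      intro i
      have : w i * (m i / w i) ≤ m i := by
        rw [mul_comm]; exact Nat.div_mul_le_self (m i) (w i)
      simpa using this
end

section
/- Let $I = \bigcap_{j=1}^r \langle x_i^{w_i} : i \in A_j \rangle$ be a monomial ideal with a standard linear weighting $w = (w_1,\dots,w_n)$, and let $\tilde{I} = \bigcap_{j=1}^r \bigcap_{\substack{i \in A_j \\ 1 \le d_i \le w_i}} \langle x_{i,d_i} : i \in A_j \rangle$ be its polarization in $T = K[x_{i,d} : 1 \le i \le n, 1 \le d \le w_i]$. Then for every $s \ge 1$, the minimal degree of a monomial in $I^{(s)} = \bigcap_j \langle x_i^{w_i} : i \in A_j\rangle^s$ equals the minimal degree of a monomial in $\tilde{I}^{(s)}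 = \bigcap_j \bigcap_{d} \langle x_{i,d_i} : i \in A_j \rangle^s$, i.e., $\alpha(I^{(s)}) = \alpha(\tilde{I}^{(s)})$. -/
open MvPolynomial Finset

/-!
A monomial `x^m` lies in `⟨x_i^{w_i} : i ∈ A⟩^s` iff `∑_{i ∈ A} ⌊m_i / w_i⌋ ≥ s`, and a monomial
`x^M` of `T` lies in `⟨x_{i,d_i} : i ∈ A⟩^s` for every choice `d` iff `∑_{i ∈ A} min_k M_{i,k} ≥ s`.
Hence `x^m ↦ ∏ x_{i,k}^{⌊m_i / w_i⌋}` and `x^M ↦ ∏ x_i^{w_i · min_k M_{i,k}}` carry monomials of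
`I^{(s)}` to monomials of `Ĩ^{(s)}` and back without raising the degree, so the least degrees agree.
-/

theorem Nat.sInf_le_sInf_of_forall_exists_le {S T : Set ℕ} (hT : T.Nonempty)
    (h : ∀ b ∈ T, ∃ a ∈ S, a ≤ b) : sInf S ≤ sInf T :=
  le_csInf hT fun b hb => let ⟨_, ha, hab⟩ := h b hb; (Nat.sInf_le ha).trans hab

theorem alphaI_eq_of_forall_exists_degree_le {K σ τ : Type*} [Field K]
    {L : Ideal (MvPolynomial σ K)} {L' : Ideal (MvPolynomial τ K)}
    (h : ∀ m, monomial m (1 : K) ∈ L → ∃ m', m'.degree ≤ m.degree ∧ monomial m' (1 : K) ∈ L')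
    (h' : ∀ m', monomial m' (1 : K) ∈ L' → ∃ m, m.degree ≤ m'.degree ∧ monomial m (1 : K) ∈ L) :
    alphaI L = alphaI L' := by
  set S := {d | ∃ m : σ →₀ ℕ, m.degree = d ∧ monomial m (1 : K) ∈ L}
  set T := {d | ∃ m : τ →₀ ℕ, m.degree = d ∧ monomial m (1 : K) ∈ L'}
  have hST : ∀ a ∈ S, ∃ b ∈ T, b ≤ a := by
    rintro _ ⟨m, rfl, hm⟩
    obtain ⟨m', hle, hm'⟩ := h m hm
    exact ⟨_, ⟨m', rfl, hm'⟩, hle⟩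
  have hTS : ∀ b ∈ T, ∃ a ∈ S, a ≤ b := by
    rintro _ ⟨m', rfl, hm'⟩
    obtain ⟨m, hle, hm⟩ := h' m' hm'
    exact ⟨_, ⟨m, rfl, hm⟩, hle⟩
  change sInf S = sInf T
  rcases S.eq_empty_or_nonempty with hS | hS
  · have hT : T = ∅ := Set.eq_empty_of_forall_notMem fun b hb => by
      obtain ⟨a, ha, -⟩ := hTS b hb
      simp [hS] at ha
    rw [hS, hT]
  · obtain ⟨a, ha⟩ := hS
    obtain ⟨b, hb, -⟩ := hST a ha
    exact le_antisymm (Nat.sInf_le_sInf_of_forall_exists_le ⟨b, hb⟩ hTS)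
      (Nat.sInf_le_sInf_of_forall_exists_le ⟨a, ha⟩ hST)

section SpanXPow

variable {R σ : Type*} [CommSemiring R] (B : Finset σ) (t : σ → ℕ)

-- `m ↦ ∑ x ∈ B, m x / t x` is superadditive and at least `1` on every generator.
theorem span_X_pow_pow_le (ht : ∀ x ∈ B, 0 < t x) (s : ℕ) :
    Ideal.span ((fun x => (X x : MvPolynomial σ R) ^ t x) '' ↑B) ^ s ≤
      Ideal.span ((fun m => monomial m (1 : R)) '' {m | s ≤ ∑ x ∈ B, m x / t x}) := by
  induction s with
  | zero =>
    rw [pow_zero, Ideal.one_eq_top, top_le_iff, Ideal.eq_top_iff_one, ← C_1, ← monomial_zero']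
    exact Ideal.subset_span ⟨0, Nat.zero_le _, rfl⟩
  | succ s ih =>
    rw [pow_succ']
    refine (Ideal.mul_mono_right ih).trans ?_
    rw [Ideal.span_mul_span', Ideal.span_le]
    rintro _ ⟨_, ⟨x, hx, rfl⟩, _, ⟨m, hm, rfl⟩, rfl⟩
    refine Ideal.subset_span ⟨Finsupp.single x (t x) + m, ?_, by
      simp only [X_pow_eq_monomial, monomial_mul, one_mul]⟩
    have hone : 1 ≤ ∑ y ∈ B, Finsupp.single x (t x) y / t y := by
      refine le_trans ?_ (Finset.single_le_sum (fun _ _ => Nat.zero_le _) hx)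
      rw [Finsupp.single_eq_same, Nat.div_self (ht x hx)]
    calc s + 1 ≤ ∑ y ∈ B, m y / t y + ∑ y ∈ B, Finsupp.single x (t x) y / t y :=
          add_le_add hm hone
      _ ≤ ∑ y ∈ B, (Finsupp.single x (t x) + m) y / t y := by
          rw [← Finset.sum_add_distrib]
          refine Finset.sum_le_sum fun y _ => ?_
          rw [Finsupp.add_apply, add_comm]
          exact Nat.div_add_div_le_add_div

theorem prod_X_pow_pow_eq_monomial (k : σ → ℕ) :
    ∏ x ∈ B, ((X x : MvPolynomial σ R) ^ t x) ^ k x =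
      monomial (∑ x ∈ B, Finsupp.single x (t x * k x)) 1 := by
  simp only [← pow_mul]
  simp only [X_pow_eq_monomial, monomial_sum_one]

theorem monomial_mem_span_X_pow_pow_iff [Nontrivial R] (ht : ∀ x ∈ B, 0 < t x) (s : ℕ)
    (m : σ →₀ ℕ) :
    monomial m (1 : R) ∈ Ideal.span ((fun x => (X x : MvPolynomial σ R) ^ t x) '' ↑B) ^ s ↔
      s ≤ ∑ x ∈ B, m x / t x := by
  classical
  constructor
  · intro hm
    obtain ⟨g, hg, hgm⟩ := mem_ideal_span_monomial_image.1 (span_X_pow_pow_le B t ht s hm) m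
      (by rw [support_monomial, if_neg one_ne_zero]; exact Finset.mem_singleton_self m)
    exact hg.trans (Finset.sum_le_sum fun x _ => Nat.div_le_div_right (hgm x))
  · intro hs
    refine Ideal.mem_of_dvd _ (a := ∏ x ∈ B, ((X x : MvPolynomial σ R) ^ t x) ^ (m x / t x))
      ?_ (Ideal.pow_le_pow_right hs ?_)
    · rw [prod_X_pow_pow_eq_monomial, monomial_dvd_monomial]
      refine ⟨Or.inr fun y => ?_, dvd_rfl⟩
      simp only [Finsupp.coe_finsetSum, Finset.sum_apply, Finsupp.single_apply,
        Finset.sum_ite_eq']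
      split_ifs
      · exact Nat.mul_div_le _ _
      · exact Nat.zero_le _
    · rw [← Finset.prod_pow_eq_pow_sum]
      exact Ideal.prod_mem_prod fun x hx =>
        Ideal.pow_mem_pow (Ideal.subset_span (Set.mem_image_of_mem _ hx)) _

end SpanXPow

theorem le_sum_iInf_iff {ι : Type*} {κ : ι → Type*} [∀ i, Nonempty (κ i)] (A : Finset ι)
    (f : (i : ι) → κ i → ℕ) (s : ℕ) :
    (∀ d : (i : ι) → κ i, s ≤ ∑ i ∈ A, f i (d i)) ↔ s ≤ ∑ i ∈ A, ⨅ k, f i k := by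
  constructor
  · intro h
    choose d hd using fun i => ciInf_mem (f i)
    simpa only [hd] using h d
  · exact fun h d => h.trans (Finset.sum_le_sum fun i _ => ciInf_le' _ _)

section Polarization

variable {K : Type*} [Field K] {n : ℕ} (w : Fin n → ℕ)

noncomputable def polarPrime (B : Finset (Fin n)) (d : (i : Fin n) → Fin (w i)) :
    Ideal (MvPolynomial (Σ i : Fin n, Fin (w i)) K) :=
  Ideal.span ((fun i => X ⟨i, d i⟩) '' ↑B)

theorem monomial_mem_polarPrime_pow_iff (B : Finset (Fin n)) (d : (i : Fin n) → Fin (w i))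
    (s : ℕ) (M : (Σ i : Fin n, Fin (w i)) →₀ ℕ) :
    monomial M (1 : K) ∈ polarPrime w B d ^ s ↔ s ≤ ∑ i ∈ B, M ⟨i, d i⟩ := by
  let e : Fin n ↪ Σ i : Fin n, Fin (w i) := ⟨fun i => ⟨i, d i⟩, fun _ _ h => congrArg Sigma.fst h⟩
  have hP : polarPrime w B d =
      Ideal.span ((fun x => (X x : MvPolynomial _ K) ^ 1) '' ↑(B.map e)) := by
    simp only [polarPrime, pow_one, Finset.coe_map, Set.image_image]
    rfl
  rw [hP, monomial_mem_span_X_pow_pow_iff _ _ (fun _ _ => one_pos), Finset.sum_map]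
  simp only [Nat.div_one]
  rfl

theorem monomial_mem_iInf_qIdeal_pow_iff {ι : Type*} (A : ι → Finset (Fin n)) (hw : ∀ i, 0 < w i)
    (s : ℕ) (m : Fin n →₀ ℕ) :
    monomial m (1 : K) ∈ ⨅ j, qIdeal (A j) w ^ s ↔ ∀ j, s ≤ ∑ i ∈ A j, m i / w i := by
  simp only [Submodule.mem_iInf, qIdeal, monomial_mem_span_X_pow_pow_iff _ _ (fun i _ => hw i)]

theorem monomial_mem_iInf_polarPrime_pow_iff {ι : Type*} (A : ι → Finset (Fin n))
    (hw : ∀ i, 0 < w i) (s : ℕ) (M : (Σ i : Fin n, Fin (w i)) →₀ ℕ) :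
    monomial M (1 : K) ∈ ⨅ j, ⨅ d, polarPrime w (A j) d ^ s ↔
      ∀ j, s ≤ ∑ i ∈ A j, ⨅ k, M ⟨i, k⟩ := by
  have : ∀ i, Nonempty (Fin (w i)) := fun i => ⟨⟨0, hw i⟩⟩
  simp only [Submodule.mem_iInf, monomial_mem_polarPrime_pow_iff,
    le_sum_iInf_iff (A _) (fun i k => M ⟨i, k⟩)]

noncomputable def polarizeExp (m : Fin n →₀ ℕ) : (Σ i : Fin n, Fin (w i)) →₀ ℕ :=
  Finsupp.equivFunOnFinite.symm fun x => m x.1 / w x.1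

noncomputable def depolarizeExp (M : (Σ i : Fin n, Fin (w i)) →₀ ℕ) : Fin n →₀ ℕ :=
  Finsupp.equivFunOnFinite.symm fun i => w i * ⨅ k, M ⟨i, k⟩

theorem iInf_polarizeExp (hw : ∀ i, 0 < w i) (m : Fin n →₀ ℕ) (i : Fin n) :
    ⨅ k, polarizeExp w m ⟨i, k⟩ = m i / w i := by
  have : Nonempty (Fin (w i)) := ⟨⟨0, hw i⟩⟩
  simp only [polarizeExp, Finsupp.coe_equivFunOnFinite_symm]
  exact ciInf_const

theorem depolarizeExp_div (hw : ∀ i, 0 < w i) (M : (Σ i : Fin n, Fin (w i)) →₀ ℕ) (i : Fin n) :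
    depolarizeExp w M i / w i = ⨅ k, M ⟨i, k⟩ :=
  Nat.mul_div_cancel_left _ (hw i)

theorem degree_polarizeExp_le (m : Fin n →₀ ℕ) : (polarizeExp w m).degree ≤ m.degree := by
  rw [Finsupp.degree_eq_sum, Finsupp.degree_eq_sum, ← Finset.univ_sigma_univ, Finset.sum_sigma]
  refine Finset.sum_le_sum fun i _ => ?_
  simp only [polarizeExp, Finsupp.coe_equivFunOnFinite_symm, Finset.sum_const,
    Finset.card_univ, Fintype.card_fin, smul_eq_mul]
  exact Nat.mul_div_le _ _

theorem degree_depolarizeExp_le (M : (Σ i : Fin n, Fin (w i)) →₀ ℕ) :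
    (depolarizeExp w M).degree ≤ M.degree := by
  rw [Finsupp.degree_eq_sum, Finsupp.degree_eq_sum, ← Finset.univ_sigma_univ, Finset.sum_sigma]
  refine Finset.sum_le_sum fun i _ => ?_
  have := Finset.card_nsmul_le_sum Finset.univ (fun k => M ⟨i, k⟩) (⨅ k, M ⟨i, k⟩)
    fun k _ => ciInf_le' _ k
  simpa [depolarizeExp] using this

end Polarization

theorem alpha_symbPow_eq_alpha_polarization_general {K : Type*} [Field K] {n r : ℕ}
    (A : Fin r → Finset (Fin n)) (w : Fin n → ℕ) (hw : ∀ i, 0 < w i)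
    (s : ℕ) :
    alphaI (⨅ j, (qIdeal (K := K) (A j) w) ^ s) =
      alphaI (⨅ j, ⨅ d : (i : Fin n) → Fin (w i),
        (Ideal.span ((fun i => (X (⟨i, d i⟩ : Σ i : Fin n, Fin (w i)) :
          MvPolynomial (Σ i : Fin n, Fin (w i)) K)) '' ↑(A j))) ^ s) := by
  refine alphaI_eq_of_forall_exists_degree_le
    (fun m hm => ⟨polarizeExp w m, degree_polarizeExp_le w m, ?_⟩)
    (fun M hM => ⟨depolarizeExp w M, degree_depolarizeExp_le w M, ?_⟩)
  · rw [monomial_mem_iInf_qIdeal_pow_iff w A hw] at hm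
    refine (monomial_mem_iInf_polarPrime_pow_iff w A hw s _).2 fun j => ?_
    simpa only [iInf_polarizeExp w hw] using hm j
  · refine (monomial_mem_iInf_qIdeal_pow_iff w A hw s _).2 fun j => ?_
    simpa only [depolarizeExp_div w hw] using
      (monomial_mem_iInf_polarPrime_pow_iff w A hw s M).1 hM j

/-- for an ideal with a standard linear weighting, `α` of the symbolic powers
is preserved under polarization. -/
theorem alpha_symbPow_eq_alpha_polarization {K : Type*} [Field K] {n r : ℕ}
    (A : Fin r → Finset (Fin n)) (w : Fin n → ℕ) (hw : ∀ i, 0 < w i)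
    (hApos : ∀ j, (A j).Nonempty)
    (s : ℕ) (hs : 1 ≤ s) :
    alphaI (⨅ j, (qIdeal (K := K) (A j) w) ^ s) =
      alphaI (⨅ j, ⨅ d : (i : Fin n) → Fin (w i),
        (Ideal.span ((fun i => (X (⟨i, d i⟩ : Σ i : Fin n, Fin (w i)) :
          MvPolynomial (Σ i : Fin n, Fin (w i)) K)) '' ↑(A j))) ^ s) :=
  alpha_symbPow_eq_alpha_polarization_general A w hw s
end

section
/- Let $I = \langle x_1, x_2^2 \rangle \cap \langle x_2, x_3^2 \rangle \subset K[x_1,x_2,x_3]$ and let $\tilde{I} = \langle x_{1,1}, x_{2,1}\rangle \cap \langle x_{1,1}, x_{2,2}\rangle \cap \langle x_{2,1}, x_{3,1}\rangle \cap \langle x_{2,1}, x_{3,2}\rangle$ be its polarization. Then $\alpha(I^{(2)}) = 3$ while $\alpha(\tilde{I}^{(2)}) = 4$; in particular $\alpha(I^{(2)}) \neq \alpha(\tilde{I}^{(2)})$. -/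
open MvPolynomial Finset

lemma sq_span_pair {K σ : Type*} [Field K] (a b : σ →₀ ℕ) :
    (Ideal.span {MvPolynomial.monomial a (1:K), MvPolynomial.monomial b 1})^2
      = Ideal.span ((fun s => MvPolynomial.monomial s (1:K)) '' {a+a, a+b, b+b}) := by
  rw [sq, Ideal.span_mul_span]
  congr 1
  ext x
  simp only [Set.mem_iUnion, Set.mem_insert_iff, Set.mem_singleton_iff, Set.mem_image,
    exists_prop]
  constructor
  · rintro ⟨f, (rfl|rfl), g, (rfl|rfl), rfl⟩ <;> simp [monomial_mul, mul_comm]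
  · rintro ⟨s, (rfl|rfl|rfl), rfl⟩
    · exact ⟨_, Or.inl rfl, _, Or.inl rfl, by simp [monomial_mul]⟩
    · exact ⟨_, Or.inl rfl, _, Or.inr rfl, by simp [monomial_mul]⟩
    · exact ⟨_, Or.inr rfl, _, Or.inr rfl, by simp [monomial_mul]⟩

lemma mem_sq_span_pair {K σ : Type*} [Field K] (a b m : σ →₀ ℕ) :
    MvPolynomial.monomial m (1:K) ∈
        (Ideal.span {MvPolynomial.monomial a (1:K), MvPolynomial.monomial b 1})^2 ↔
      a + a ≤ m ∨ a + b ≤ m ∨ b + b ≤ m := by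
  classical
  rw [sq_span_pair, mem_ideal_span_monomial_image]
  constructor
  · intro h
    have := h m (by simp [mem_support_iff, coeff_monomial])
    simpa using this
  · intro h xi hxi
    have hmx : m = xi := by
      by_contra hne
      simp [mem_support_iff, coeff_monomial, hne] at hxi
    subst hmx
    simpa using h

lemma mem_sq_pair_iff {K σ : Type*} [Field K] [DecidableEq σ] {i j : σ} (hij : i ≠ j)
    (p q : ℕ) (m : σ →₀ ℕ) :
    MvPolynomial.monomial m (1:K) ∈
        (Ideal.span {MvPolynomial.monomial (Finsupp.single i p) (1:K),
          MvPolynomial.monomial (Finsupp.single j q) 1})^2 ↔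
      (p + p ≤ m i) ∨ (p ≤ m i ∧ q ≤ m j) ∨ (q + q ≤ m j) := by
  rw [mem_sq_span_pair]
  rw [← Finsupp.single_add, Finsupp.single_le_iff, ← Finsupp.single_add, Finsupp.single_le_iff]
  have : Finsupp.single i p + Finsupp.single j q ≤ m ↔ p ≤ m i ∧ q ≤ m j := by
    constructor
    · intro h
      refine ⟨?_, ?_⟩
      · simpa [Finsupp.single_apply, hij.symm] using Finsupp.le_def.mp h i
      · simpa [Finsupp.single_apply, hij] using Finsupp.le_def.mp h j
    · rintro ⟨h1, h2⟩
      rw [Finsupp.le_def]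
      intro k
      by_cases hk : k = i
      · subst hk; simpa [Finsupp.single_apply, hij.symm] using h1
      · by_cases hk2 : k = j
        · subst hk2; simpa [Finsupp.single_apply, hij] using h2
        · simp [Finsupp.single_apply, Ne.symm hk, Ne.symm hk2]
  rw [this]

lemma hXmon {K σ : Type*} [Field K] (i : σ) :
    (X i : MvPolynomial σ K) = MvPolynomial.monomial (Finsupp.single i 1) 1 := by
  rw [← pow_one (X i), X_pow_eq_monomial]

lemma alpha_first {K : Type*} [Field K] :
    alphaI ((Ideal.span {(X 0 : MvPolynomial (Fin 3) K), (X 1) ^ 2}) ^ 2 ⊓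
        (Ideal.span {(X 1 : MvPolynomial (Fin 3) K), (X 2) ^ 2}) ^ 2) = 3 := by
  classical
  have e1 : (Ideal.span {(X 0 : MvPolynomial (Fin 3) K), (X 1) ^ 2}) =
      Ideal.span {MvPolynomial.monomial (Finsupp.single 0 1) (1:K),
        MvPolynomial.monomial (Finsupp.single 1 2) 1} := by
    rw [hXmon, X_pow_eq_monomial]
  have e2 : (Ideal.span {(X 1 : MvPolynomial (Fin 3) K), (X 2) ^ 2}) =
      Ideal.span {MvPolynomial.monomial (Finsupp.single 1 1) (1:K),
        MvPolynomial.monomial (Finsupp.single 2 2) 1} := by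
    rw [hXmon, X_pow_eq_monomial]
  set m₀ : Fin 3 →₀ ℕ := Finsupp.single 0 1 + Finsupp.single 1 2 with hm₀
  have hmem : MvPolynomial.monomial m₀ (1:K) ∈
      (Ideal.span {(X 0 : MvPolynomial (Fin 3) K), (X 1) ^ 2}) ^ 2 ⊓
        (Ideal.span {(X 1 : MvPolynomial (Fin 3) K), (X 2) ^ 2}) ^ 2 := by
    rw [Submodule.mem_inf, e1, e2, mem_sq_pair_iff (by decide : (0:Fin 3) ≠ 1),
      mem_sq_pair_iff (by decide : (1:Fin 3) ≠ 2)]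
    simp [hm₀, Finsupp.single_apply]
  have hdeg : (m₀.sum fun _ e => e) = 3 := by
    rw [Finsupp.sum_fintype _ _ fun _ => rfl]
    simp [hm₀, Fin.sum_univ_three, Finsupp.single_apply]
  unfold alphaI
  apply le_antisymm
  · apply Nat.sInf_le
    exact ⟨m₀, hdeg, hmem⟩
  · refine le_csInf ⟨3, ⟨m₀, hdeg, hmem⟩⟩ ?_
    rintro d ⟨m, hd, hm⟩
    rw [Submodule.mem_inf, e1, e2, mem_sq_pair_iff (by decide : (0:Fin 3) ≠ 1),
      mem_sq_pair_iff (by decide : (1:Fin 3) ≠ 2)] at hm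
    rw [Finsupp.sum_fintype _ _ fun _ => rfl, Fin.sum_univ_three] at hd
    obtain ⟨h1, h2⟩ := hm
    omega

lemma alpha_second {K : Type*} [Field K] :
    alphaI ((Ideal.span {(X (0, 0) : MvPolynomial (Fin 3 × Fin 2) K), X (1, 0)}) ^ 2 ⊓
        (Ideal.span {(X (0, 0) : MvPolynomial (Fin 3 × Fin 2) K), X (1, 1)}) ^ 2 ⊓
        (Ideal.span {(X (1, 0) : MvPolynomial (Fin 3 × Fin 2) K), X (2, 0)}) ^ 2 ⊓
        (Ideal.span {(X (1, 0) : MvPolynomial (Fin 3 × Fin 2) K), X (2, 1)}) ^ 2) = 4 := by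
  classical
  have e : ∀ u v : Fin 3 × Fin 2,
      (Ideal.span {(X u : MvPolynomial (Fin 3 × Fin 2) K), X v}) =
      Ideal.span {MvPolynomial.monomial (Finsupp.single u 1) (1:K),
        MvPolynomial.monomial (Finsupp.single v 1) 1} := by
    intro u v; rw [hXmon, hXmon]
  set m₀ : Fin 3 × Fin 2 →₀ ℕ :=
    Finsupp.single (0,0) 1 + Finsupp.single (1,0) 2 + Finsupp.single (1,1) 1 with hm₀
  have hmem : MvPolynomial.monomial m₀ (1:K) ∈
      (Ideal.span {(X (0, 0) : MvPolynomial (Fin 3 × Fin 2) K), X (1, 0)}) ^ 2 ⊓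
        (Ideal.span {(X (0, 0) : MvPolynomial (Fin 3 × Fin 2) K), X (1, 1)}) ^ 2 ⊓
        (Ideal.span {(X (1, 0) : MvPolynomial (Fin 3 × Fin 2) K), X (2, 0)}) ^ 2 ⊓
        (Ideal.span {(X (1, 0) : MvPolynomial (Fin 3 × Fin 2) K), X (2, 1)}) ^ 2 := by
    rw [Submodule.mem_inf, Submodule.mem_inf, Submodule.mem_inf, e, e, e, e,
      mem_sq_pair_iff (by decide : ((0,0) : Fin 3 × Fin 2) ≠ (1,0)),
      mem_sq_pair_iff (by decide : ((0,0) : Fin 3 × Fin 2) ≠ (1,1)),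
      mem_sq_pair_iff (by decide : ((1,0) : Fin 3 × Fin 2) ≠ (2,0)),
      mem_sq_pair_iff (by decide : ((1,0) : Fin 3 × Fin 2) ≠ (2,1))]
    simp [hm₀, Finsupp.single_apply]
  have hdeg : (m₀.sum fun _ e => e) = 4 := by
    rw [Finsupp.sum_fintype _ _ fun _ => rfl]
    simp [hm₀, Fintype.sum_prod_type, Fin.sum_univ_three, Fin.sum_univ_two,
      Finsupp.single_apply]
  unfold alphaI
  apply le_antisymm
  · apply Nat.sInf_le
    exact ⟨m₀, hdeg, hmem⟩
  · refine le_csInf ⟨4, ⟨m₀, hdeg, hmem⟩⟩ ?_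
    rintro d ⟨m, hd, hm⟩
    rw [Submodule.mem_inf, Submodule.mem_inf, Submodule.mem_inf, e, e, e, e,
      mem_sq_pair_iff (by decide : ((0,0) : Fin 3 × Fin 2) ≠ (1,0)),
      mem_sq_pair_iff (by decide : ((0,0) : Fin 3 × Fin 2) ≠ (1,1)),
      mem_sq_pair_iff (by decide : ((1,0) : Fin 3 × Fin 2) ≠ (2,0)),
      mem_sq_pair_iff (by decide : ((1,0) : Fin 3 × Fin 2) ≠ (2,1))] at hm
    rw [Finsupp.sum_fintype _ _ fun _ => rfl, Fintype.sum_prod_type,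
      Fin.sum_univ_three] at hd
    simp only [Fin.sum_univ_two] at hd
    obtain ⟨⟨⟨h1, h2⟩, h3⟩, h4⟩ := hm
    omega

/-- for `I = ⟨x₁,x₂²⟩ ∩ ⟨x₂,x₃²⟩`, `α(I^{(2)}) = 3` while `α(Ĩ^{(2)}) = 4`. -/
theorem alpha_example_polarization_fails {K : Type*} [Field K] :
    alphaI ((Ideal.span {(X 0 : MvPolynomial (Fin 3) K), (X 1) ^ 2}) ^ 2 ⊓
        (Ideal.span {(X 1 : MvPolynomial (Fin 3) K), (X 2) ^ 2}) ^ 2) = 3 ∧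
      alphaI ((Ideal.span {(X (0, 0) : MvPolynomial (Fin 3 × Fin 2) K), X (1, 0)}) ^ 2 ⊓
        (Ideal.span {(X (0, 0) : MvPolynomial (Fin 3 × Fin 2) K), X (1, 1)}) ^ 2 ⊓
        (Ideal.span {(X (1, 0) : MvPolynomial (Fin 3 × Fin 2) K), X (2, 0)}) ^ 2 ⊓
        (Ideal.span {(X (1, 0) : MvPolynomial (Fin 3 × Fin 2) K), X (2, 1)}) ^ 2) = 4 ∧
      alphaI ((Ideal.span {(X 0 : MvPolynomial (Fin 3) K), (X 1) ^ 2}) ^ 2 ⊓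
        (Ideal.span {(X 1 : MvPolynomial (Fin 3) K), (X 2) ^ 2}) ^ 2) ≠
      alphaI ((Ideal.span {(X (0, 0) : MvPolynomial (Fin 3 × Fin 2) K), X (1, 0)}) ^ 2 ⊓
        (Ideal.span {(X (0, 0) : MvPolynomial (Fin 3 × Fin 2) K), X (1, 1)}) ^ 2 ⊓
        (Ideal.span {(X (1, 0) : MvPolynomial (Fin 3 × Fin 2) K), X (2, 0)}) ^ 2 ⊓
        (Ideal.span {(X (1, 0) : MvPolynomial (Fin 3 × Fin 2) K), X (2, 1)}) ^ 2) := by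
  refine ⟨alpha_first, alpha_second, ?_⟩
  rw [alpha_first, alpha_second]
  omega
end

section
/- Let $I = \bigcap_{j=1}^r \mathfrak{q}_j$ with $\mathfrak{q}_j = \langle x_i^{w_{j,i}} : i \in A_j\rangle$, and suppose the hypergraph with edges $A_1,\dots,A_r$ is whiskered with whiskers $A_{j_1},\dots,A_{j_t}$ attached at vertices $i_1,\dots,i_t$, satisfying: (i) $w_{j_k,i} \ge w_{j_k,i_k}$ for all $k$ and $i \in A_{j_k}$; (ii) for each $j \ne j_1,\dots,j_t$ there exists $k$ with $i_k \in A_j$ and $w_{j,i_k} \le w_{j_k,i_k}$. Then, in the polarization setting, the monomial $\tilde{f} = \prod_{k=1}^t (x_{i_k,1}\cdots x_{i_k,w_{j_k,i_k}})^s$ lies in $\tilde{I}^{(s)} = \bigcap_{j=1}^r \bigcap_{d} \langle x_{i,d_i} : i \in A_j\rangle^s$, where $d = (d_i)_{i \in A_j}$ ranges over $1 \le d_i \le w_{j,i}$. In particular $\alpha(\tilde{I}^{(s)}) \le s \sum_{k=1}^t w_{j_k,i_k}$. -/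
open MvPolynomial Finset

/-!
Fix an edge `A j` and a choice `d`. Some attachment vertex `i_k` lies in `A j` with
`d (i_k) ≤ w_{j_k,i_k}`: for a whisker take its own vertex, otherwise use condition (ii). Then the
variable `x_{i_k, d(i_k)}` occurs in the `k`-th factor of `f̃`, so `x_{i_k, d(i_k)}^s` divides `f̃`
and lies in `⟨x_{i,d_i} : i ∈ A j⟩^s`. Since `f̃` is a monomial of degree `s ∑ₖ w_{j_k,i_k}`,
the bound on `α` follows.
-/

lemma exists_whisker_vertex_le {α ι κ : Type*} (A : ι → Finset α) (w : ι → α → ℕ)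
    (jw : κ → ι) (iv : κ → α) (hik : ∀ k, iv k ∈ A (jw k))
    (hcond2 : ∀ l, (∀ k, l ≠ jw k) → ∃ k, iv k ∈ A l ∧ w l (iv k) ≤ w (jw k) (iv k))
    (j : ι) (d : α → ℕ) (hd : ∀ i ∈ A j, d i ≤ w j i) :
    ∃ k, iv k ∈ A j ∧ d (iv k) ≤ w (jw k) (iv k) := by
  by_cases hwhisker : ∀ k, j ≠ jw k
  · obtain ⟨k, hk, hle⟩ := hcond2 j hwhisker
    exact ⟨k, hk, (hd _ hk).trans hle⟩
  · obtain ⟨k, rfl⟩ := not_forall_not.1 hwhisker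
    exact ⟨k, hik k, hd _ (hik k)⟩

lemma Finset.pow_dvd_prod_pow_prod {M ι κ : Type*} [CommMonoid M] {T : Finset κ}
    {S : κ → Finset ι} {f : κ → ι → M} {k : κ} {e : ι} (hk : k ∈ T) (he : e ∈ S k) (s : ℕ) :
    f k e ^ s ∣ ∏ k ∈ T, (∏ d ∈ S k, f k d) ^ s :=
  (pow_dvd_pow_of_dvd (dvd_prod_of_mem _ he) s).trans (dvd_prod_of_mem _ hk)

lemma alphaI_le_of_prod_X_pow_mem {K σ ι : Type*} [Field K] {L : Ideal (MvPolynomial σ K)}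
    (S : Finset ι) (v : ι → σ) (e : ℕ) (h : ∏ x ∈ S, (X (v x) : MvPolynomial σ K) ^ e ∈ L) :
    alphaI L ≤ e * #S := by
  have hmon : ∏ x ∈ S, (X (v x) : MvPolynomial σ K) ^ e =
      monomial (∑ x ∈ S, Finsupp.single (v x) e) 1 := by
    simp only [X_pow_eq_monomial, monomial_sum_one]
  have hdeg : (∑ x ∈ S, Finsupp.single (v x) e).degree = e * #S := by
    simp [mul_comm]
  exact Nat.sInf_le ⟨_, hdeg, hmon ▸ h⟩

theorem polarized_monomial_mem_symbPow_general {K : Type*} [Field K] {n r t : ℕ}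
    (A : Fin r → Finset (Fin n)) (w : Fin r → Fin n → ℕ)
    (jw : Fin t → Fin r) (iv : Fin t → Fin n)
    (hik : ∀ k, iv k ∈ A (jw k))
    (hcond2 : ∀ l : Fin r, (∀ k, l ≠ jw k) →
      ∃ k, iv k ∈ A l ∧ w l (iv k) ≤ w (jw k) (iv k))
    (s : ℕ) :
    (∏ k, (∏ d ∈ Finset.Icc 1 (w (jw k) (iv k)),
        (X (iv k, d) : MvPolynomial (Fin n × ℕ) K)) ^ s) ∈
      (⨅ j, ⨅ d : Fin n → ℕ, ⨅ (_ : ∀ i ∈ A j, d i ∈ Finset.Icc 1 (w j i)),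
        (Ideal.span ((fun i => (X (i, d i) : MvPolynomial (Fin n × ℕ) K)) '' ↑(A j))) ^ s) ∧
    alphaI (⨅ j, ⨅ d : Fin n → ℕ, ⨅ (_ : ∀ i ∈ A j, d i ∈ Finset.Icc 1 (w j i)),
        (Ideal.span ((fun i => (X (i, d i) : MvPolynomial (Fin n × ℕ) K)) '' ↑(A j))) ^ s) ≤
      s * ∑ k, w (jw k) (iv k) := by
  refine (and_iff_left_of_imp fun hmem => ?bound).2 ?mem
  case mem =>
    simp only [Ideal.mem_iInf]
    intro j d hd
    obtain ⟨k, hk, hle⟩ := exists_whisker_vertex_le A w jw iv hik hcond2 j d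
      fun i hi => (mem_Icc.1 (hd i hi)).2
    have hdk : d (iv k) ∈ Icc 1 (w (jw k) (iv k)) := mem_Icc.2 ⟨(mem_Icc.1 (hd _ hk)).1, hle⟩
    exact Ideal.mem_of_dvd _ (pow_dvd_prod_pow_prod (mem_univ k) hdk s)
      (Ideal.pow_mem_pow (Ideal.subset_span (Set.mem_image_of_mem _ hk)) s)
  case bound =>
    rw [← prod_congr rfl fun k _ => prod_pow _ s _, prod_sigma'] at hmem
    refine (alphaI_le_of_prod_X_pow_mem _ _ s hmem).trans_eq ?_
    simp [card_sigma]

/-- under the whiskered hypotheses, the monomial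
`f̃ = ∏ₖ (x_{i_k,1} ⋯ x_{i_k,w_{j_k,i_k}})^s` lies in `Ĩ^{(s)}`, whence
`α(Ĩ^{(s)}) ≤ s ∑ₖ w_{j_k,i_k}`. -/
theorem polarized_monomial_mem_symbPow {K : Type*} [Field K] {n r t : ℕ}
    (A : Fin r → Finset (Fin n)) (w : Fin r → Fin n → ℕ)
    (hwpos : ∀ j, ∀ i ∈ A j, 0 < w j i)
    (jw : Fin t → Fin r) (iv : Fin t → Fin n)
    (hdisj : ∀ k k', k ≠ k' → Disjoint (A (jw k)) (A (jw k')))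
    (hcov : ∀ l : Fin r, (∀ k, l ≠ jw k) → ↑(A l) ⊆ Set.range iv)
    (hik : ∀ k, iv k ∈ A (jw k))
    (hik' : ∀ k k', iv k' ∈ A (jw k) → k' = k)
    (hcond1 : ∀ k, ∀ i ∈ A (jw k), w (jw k) (iv k) ≤ w (jw k) i)
    (hcond2 : ∀ l : Fin r, (∀ k, l ≠ jw k) →
      ∃ k, iv k ∈ A l ∧ w l (iv k) ≤ w (jw k) (iv k))
    (s : ℕ) (hs : 1 ≤ s) :
    (∏ k, (∏ d ∈ Finset.Icc 1 (w (jw k) (iv k)),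
        (X (iv k, d) : MvPolynomial (Fin n × ℕ) K)) ^ s) ∈
      (⨅ j, ⨅ d : Fin n → ℕ, ⨅ (_ : ∀ i ∈ A j, d i ∈ Finset.Icc 1 (w j i)),
        (Ideal.span ((fun i => (X (i, d i) : MvPolynomial (Fin n × ℕ) K)) '' ↑(A j))) ^ s) ∧
    alphaI (⨅ j, ⨅ d : Fin n → ℕ, ⨅ (_ : ∀ i ∈ A j, d i ∈ Finset.Icc 1 (w j i)),
        (Ideal.span ((fun i => (X (i, d i) : MvPolynomial (Fin n × ℕ) K)) '' ↑(A j))) ^ s) ≤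
      s * ∑ k, w (jw k) (iv k) :=
  polarized_monomial_mem_symbPow_general A w jw iv hik hcond2 s
end

section
/- Let $I \subset K[x_1,\dots,x_n]$ be a monomial ideal without embedded associated primes, with minimal irreducible decomposition $I = \bigcap_{j=1}^r \langle x_i^{w_{j,i}} : i \in A_j\rangle$. Suppose the set $X_I$ of pairs $(k,l)$ with $k < l$ for which there is $i \in A_k \cap A_l$ with $w_{k,i} \ne w_{l,i}$ is non-empty, and that for each $(k,l) \in X_I$ one has $A_j \not\subset A_k \cup A_l$ for every $j \in [r]\setminus\{k,l\}$. Then there exists $s \ge 1$ with $I^{(s)} \ne I^s$; in fact, writing $w_2 = \alpha w_1 + \beta$ ($0 \le \beta < w_1$) for the minimum $w_1$ and maximum $w_2$ of $\{w_{j,i_0} : i_0 \in A_j\}$ for a suitable common vertex $i_0$, one has $I^{(\alpha+1)} \not\subset I^{\alpha+1}$. -/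
/-!
Let `k`, `l` be components through a vertex `i0` carrying the least weight `w₁` and the greatest
weight `w₂` at `i0`, and `s = ⌊w₂ / w₁⌋ + 1`, so that `w₂ < s w₁`. For `ι ∈ A l \ A k`, the
monomial `x^c` with `c i0 = s w₁`, `c ι = (s - 1) w_{l,ι}`, `c = 0` elsewhere on `A k ∪ A l` and
large exponents off `A k ∪ A l` lies in every `q_j^s`, since each other component has a vertex
off `A k ∪ A l`. It is not in `I^s`: a generator of `I` dividing `x^c` meets `q_k` only through
`x_{i0}` and `q_l` only through `x_{i0}` or `x_ι`, so the weighted degree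
`w_{l,ι} deg_{i0} + (w₂ - w₁) deg_ι` is at least `w_{l,ι} w₂` on it, whereas on `x^c` it is less
than `s w_{l,ι} w₂`.
-/

open MvPolynomial Finset

open scoped Pointwise

section MonomialIdeal

variable {R σ : Type*} [CommSemiring R]

theorem span_monomial_image_pow (E : Set (σ →₀ ℕ)) (s : ℕ) :
    Ideal.span ((fun m => monomial m (1 : R)) '' E) ^ s =
      Ideal.span ((fun m => monomial m (1 : R)) '' (s • E)) := by
  induction s with
  | zero => simp [Ideal.one_eq_top]
  | succ s ih =>
    rw [pow_succ, ih, Ideal.span_mul_span', succ_nsmul]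
    congr 1
    ext p
    simp only [Set.mem_mul, Set.mem_image, Set.mem_add]
    constructor
    · rintro ⟨_, ⟨a, ha, rfl⟩, _, ⟨b, hb, rfl⟩, rfl⟩
      exact ⟨a + b, ⟨a, ha, b, hb, rfl⟩, by rw [monomial_mul, one_mul]⟩
    · rintro ⟨_, ⟨a, ha, b, hb, rfl⟩, rfl⟩
      exact ⟨_, ⟨a, ha, rfl⟩, _, ⟨b, hb, rfl⟩, by rw [monomial_mul, one_mul]⟩

theorem mul_le_map_of_mem_nsmul (φ : (σ →₀ ℕ) →+ ℕ) {E : Set (σ →₀ ℕ)} {M : ℕ}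
    {c : σ →₀ ℕ} (hE : ∀ m ∈ E, m ≤ c → M ≤ φ m) :
    ∀ s : ℕ, ∀ m ∈ s • E, m ≤ c → s * M ≤ φ m
  | 0, _, _, _ => by simp
  | s + 1, _, hm, hmc => by
    rw [succ_nsmul] at hm
    obtain ⟨a, ha, b, hb, rfl⟩ := hm
    have hac : a ≤ c := le_trans le_self_add hmc
    have hbc : b ≤ c := le_trans le_add_self hmc
    rw [map_add, add_mul, one_mul]
    exact add_le_add (mul_le_map_of_mem_nsmul φ hE s a ha hac) (hE b hb hbc)

theorem monomial_notMem_span_pow_of_map_lt [Nontrivial R] (φ : (σ →₀ ℕ) →+ ℕ)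
    {E : Set (σ →₀ ℕ)} {M s : ℕ} {c : σ →₀ ℕ} (hE : ∀ m ∈ E, m ≤ c → M ≤ φ m)
    (hc : φ c < s * M) :
    monomial c (1 : R) ∉ Ideal.span ((fun m => monomial m (1 : R)) '' E) ^ s := by
  classical
  rw [span_monomial_image_pow, mem_ideal_span_monomial_image]
  intro h
  obtain ⟨m, hm, hmc⟩ := h c (by simp)
  obtain ⟨d, rfl⟩ := exists_add_of_le hmc
  have := mul_le_map_of_mem_nsmul φ hE s m hm hmc
  rw [map_add] at hc
  omega

end MonomialIdeal

section IrreducibleComponents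

variable {K : Type*} [Field K] {n : ℕ}

theorem qIdeal_eq_span_monomial (A : Finset (Fin n)) (w : Fin n → ℕ) :
    qIdeal (K := K) A w =
      Ideal.span ((fun m => monomial m (1 : K)) '' ((fun i => Finsupp.single i (w i)) '' A)) := by
  rw [qIdeal, Set.image_image]
  simp only [X_pow_eq_monomial]

theorem X_pow_mem_qIdeal {A : Finset (Fin n)} {w : Fin n → ℕ} {i : Fin n} (hi : i ∈ A) :
    (X i : MvPolynomial (Fin n) K) ^ w i ∈ qIdeal A w :=
  Ideal.subset_span ⟨i, hi, rfl⟩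

theorem monomial_mem_qIdeal_pow {A : Finset (Fin n)} {w : Fin n → ℕ} {c : Fin n →₀ ℕ}
    {i : Fin n} {s : ℕ} (hi : i ∈ A) (h : s * w i ≤ c i) :
    monomial c (1 : K) ∈ qIdeal A w ^ s := by
  refine Ideal.mem_of_dvd _ ?_ (Ideal.pow_mem_pow (X_pow_mem_qIdeal (K := K) hi) s)
  rw [← pow_mul, X_pow_eq_monomial, monomial_dvd_monomial, Finsupp.single_le_iff, mul_comm]
  exact ⟨Or.inr h, one_dvd _⟩

theorem monomial_mem_qIdeal_pow_add {A : Finset (Fin n)} {w : Fin n → ℕ} {c : Fin n →₀ ℕ}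
    {i i' : Fin n} {a b : ℕ} (hi : i ∈ A) (hi' : i' ∈ A) (hne : i ≠ i')
    (ha : a * w i ≤ c i) (hb : b * w i' ≤ c i') :
    monomial c (1 : K) ∈ qIdeal A w ^ (a + b) := by
  rw [pow_add]
  refine Ideal.mem_of_dvd _ ?_ (Ideal.mul_mem_mul (Ideal.pow_mem_pow (X_pow_mem_qIdeal hi) a)
    (Ideal.pow_mem_pow (X_pow_mem_qIdeal hi') b))
  rw [← pow_mul, ← pow_mul, X_pow_eq_monomial, X_pow_eq_monomial, monomial_mul, one_mul,
    monomial_dvd_monomial]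
  refine ⟨Or.inr fun x => ?_, one_dvd _⟩
  by_cases hx : x = i
  · subst hx
    simpa [Finsupp.single_apply, hne, mul_comm] using ha
  · by_cases hx' : x = i'
    · subst hx'
      simpa [Finsupp.single_apply, Ne.symm hne, mul_comm] using hb
    · simp [Ne.symm hx, Ne.symm hx']

theorem iInf_qIdeal_le_span_monomial {r : ℕ} (A : Fin r → Finset (Fin n))
    (w : Fin r → Fin n → ℕ) :
    ⨅ j, qIdeal (K := K) (A j) (w j) ≤
      Ideal.span ((fun m => monomial m (1 : K)) '' {m | ∀ j, ∃ i ∈ A j, w j i ≤ m i}) := by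
  intro p hp
  rw [mem_ideal_span_monomial_image]
  intro m hm
  refine ⟨m, fun j => ?_, le_rfl⟩
  have hpj := (Submodule.mem_iInf _).mp hp j
  rw [qIdeal_eq_span_monomial, mem_ideal_span_monomial_image] at hpj
  obtain ⟨_, ⟨i, hi, rfl⟩, hle⟩ := hpj m hm
  exact ⟨i, hi, Finsupp.single_le_iff.mp hle⟩

variable {r : ℕ} {A : Fin r → Finset (Fin n)} {w : Fin r → Fin n → ℕ}

theorem monomial_notMem_iInf_qIdeal_pow {k l : Fin r} {i0 ι : Fin n} {c : Fin n →₀ ℕ} {s : ℕ}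
    (hck : ∀ i ∈ A k, i ≠ i0 → c i < w k i) (hcl : ∀ i ∈ A l, i ≠ i0 → i ≠ ι → c i < w l i)
    (hlt : w k i0 < w l i0) (hc0 : c i0 ≤ s * w k i0) (hcι : c ι < s * w l ι) :
    monomial c (1 : K) ∉ (⨅ j, qIdeal (A j) (w j)) ^ s := by
  obtain ⟨D, hD⟩ := Nat.exists_eq_add_of_lt hlt
  let φ : (Fin n →₀ ℕ) →+ ℕ := w l ι • Finsupp.applyAddHom i0 + (D + 1) • Finsupp.applyAddHom ι
  have hφ (m : Fin n →₀ ℕ) : φ m = w l ι * m i0 + (D + 1) * m ι := by simp [φ]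
  refine fun hc => monomial_notMem_span_pow_of_map_lt φ (M := w l ι * w l i0) ?_ ?_
    (Ideal.pow_right_mono (iInf_qIdeal_le_span_monomial A w) s hc)
  · intro m hm hmc
    have hmk : w k i0 ≤ m i0 := by
      obtain ⟨i, hi, hwi⟩ := hm k
      by_cases h0 : i = i0
      · exact h0 ▸ hwi
      · exact absurd (hwi.trans (hmc i)) (hck i hi h0).not_ge
    obtain ⟨i, hi, hwi⟩ := hm l
    rw [hφ]
    by_cases h0 : i = i0
    · rw [h0] at hwi
      nlinarith
    by_cases hι : i = ι
    · rw [hι] at hwi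
      nlinarith
    · exact absurd (hwi.trans (hmc i)) (hcl i hi h0 hι).not_ge
  · rw [hφ]
    nlinarith

theorem not_iInf_qIdeal_pow_le_pow {k l : Fin r} {i0 : Fin n}
    (hwk : ∀ i ∈ A k, 0 < w k i) (hwl : ∀ i ∈ A l, 0 < w l i)
    (hk : i0 ∈ A k) (hl : i0 ∈ A l) (hlt : w k i0 < w l i0) (hlk : ¬ A l ⊆ A k)
    (hsep : ∀ j, j ≠ k → j ≠ l → ¬ A j ⊆ A k ∪ A l) :
    ¬ (⨅ j, qIdeal (K := K) (A j) (w j) ^ (w l i0 / w k i0 + 1)) ≤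
      (⨅ j, qIdeal (K := K) (A j) (w j)) ^ (w l i0 / w k i0 + 1) := by
  set α := w l i0 / w k i0
  obtain ⟨ι, hιl, hιk⟩ := Finset.not_subset.mp hlk
  have hι0 : ι ≠ i0 := by
    rintro rfl
    exact hιk hk
  let c : Fin n →₀ ℕ := Finsupp.equivFunOnFinite.symm fun i =>
    if i = i0 then (α + 1) * w k i0 else if i = ι then α * w l ι
    else if i ∈ A k ∪ A l then 0 else (α + 1) * ∑ j, w j i
  intro hle
  refine monomial_notMem_iInf_qIdeal_pow (c := c) (ι := ι) ?_ ?_ hlt (by simp [c]) ?_ (hle ?_)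
  · intro i hi hi0
    have hiι : i ≠ ι := by
      rintro rfl
      exact hιk hi
    simpa [c, hi0, hiι, hi] using hwk i hi
  · intro i hi hi0 hiι
    simpa [c, hi0, hiι, hi] using hwl i hi
  · simpa [c, hι0, add_mul] using hwl ι hιl
  · rw [Submodule.mem_iInf]
    intro j
    by_cases hjk : j = k
    · subst hjk
      exact monomial_mem_qIdeal_pow hk (by simp [c])
    by_cases hjl : j = l
    · subst hjl
      refine monomial_mem_qIdeal_pow_add hιl hl hι0 (by simp [c, hι0]) ?_
      simpa [c, add_mul] using (Nat.lt_div_mul_add (hwk i0 hk)).le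
    · obtain ⟨i, hi, hikl⟩ := Finset.not_subset.mp (hsep j hjk hjl)
      have hi0 : i ≠ i0 := by
        rintro rfl
        exact hikl (Finset.mem_union_left _ hk)
      have hiι : i ≠ ι := by
        rintro rfl
        exact hikl (Finset.mem_union_right _ hιl)
      refine monomial_mem_qIdeal_pow hi ?_
      simp only [c, Finsupp.coe_equivFunOnFinite_symm, if_neg hi0, if_neg hiι, if_neg hikl]
      exact Nat.mul_le_mul_left _
        (Finset.single_le_sum (f := (w · i)) (fun _ _ => Nat.zero_le _) (Finset.mem_univ j))

theorem not_iInf_qIdeal_pow_le_pow_of_weight_ne {k l : Fin r} {i0 : Fin n}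
    (hwpos : ∀ j, ∀ i ∈ A j, 0 < w j i) (hnoemb : ∀ j j', A j ⊆ A j' → j = j')
    (hsep : ∀ j j', i0 ∈ A j → i0 ∈ A j' → w j i0 < w j' i0 →
      ∀ j'', j'' ≠ j → j'' ≠ j' → ¬ A j'' ⊆ A j ∪ A j')
    (hk : i0 ∈ A k) (hl : i0 ∈ A l) (hne : w k i0 ≠ w l i0) :
    ¬ (⨅ j, qIdeal (K := K) (A j) (w j) ^
          (sSup {m | ∃ j, i0 ∈ A j ∧ m = w j i0} / sInf {m | ∃ j, i0 ∈ A j ∧ m = w j i0} + 1)) ≤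
      (⨅ j, qIdeal (K := K) (A j) (w j)) ^
          (sSup {m | ∃ j, i0 ∈ A j ∧ m = w j i0} / sInf {m | ∃ j, i0 ∈ A j ∧ m = w j i0} + 1) := by
  set S := {m : ℕ | ∃ j, i0 ∈ A j ∧ m = w j i0}
  have hkS : w k i0 ∈ S := ⟨k, hk, rfl⟩
  have hlS : w l i0 ∈ S := ⟨l, hl, rfl⟩
  have hSbdd : BddAbove S := ((Set.finite_range fun j => w j i0).subset
    (by rintro _ ⟨j, -, rfl⟩; exact ⟨j, rfl⟩)).bddAbove
  obtain ⟨jmin, hjmin, hmin⟩ := Nat.sInf_mem ⟨_, hkS⟩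
  obtain ⟨jmax, hjmax, hmax⟩ := Nat.sSup_mem ⟨_, hkS⟩ hSbdd
  have hlt : w jmin i0 < w jmax i0 := by
    have := Nat.sInf_le hkS
    have := Nat.sInf_le hlS
    have := le_csSup hSbdd hkS
    have := le_csSup hSbdd hlS
    omega
  rw [hmin, hmax]
  refine not_iInf_qIdeal_pow_le_pow (hwpos _) (hwpos _) hjmin hjmax hlt ?_
    (hsep _ _ hjmin hjmax hlt)
  intro hsub
  rw [hnoemb _ _ hsub] at hlt
  exact hlt.false

end IrreducibleComponents

theorem not_simis_of_XI_nonempty_general {K : Type*} [Field K] {n r : ℕ}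
    (A : Fin r → Finset (Fin n)) (w : Fin r → Fin n → ℕ)
    (hwpos : ∀ j, ∀ i ∈ A j, 0 < w j i)
    (hnoemb : ∀ j k, A j ⊆ A k → j = k)
    (hX : ∃ k l : Fin r, k < l ∧ ∃ i, i ∈ A k ∧ i ∈ A l ∧ w k i ≠ w l i)
    (hcond : ∀ k l : Fin r, (k < l ∧ ∃ i, i ∈ A k ∧ i ∈ A l ∧ w k i ≠ w l i) →
      ∀ j, j ≠ k → j ≠ l → ¬ (↑(A j) : Set (Fin n)) ⊆ ↑(A k) ∪ ↑(A l)) :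
    (∃ s : ℕ, 1 ≤ s ∧
      ¬ (⨅ j, (qIdeal (K := K) (A j) (w j)) ^ s) ≤ (⨅ j, qIdeal (K := K) (A j) (w j)) ^ s) ∧
    (∀ k l : Fin r, ∀ i0 : Fin n, k < l → i0 ∈ A k → i0 ∈ A l → w k i0 ≠ w l i0 →
      ¬ (⨅ j, (qIdeal (K := K) (A j) (w j)) ^
            (sSup {m : ℕ | ∃ j, i0 ∈ A j ∧ m = w j i0} /
              sInf {m : ℕ | ∃ j, i0 ∈ A j ∧ m = w j i0} + 1)) ≤
          (⨅ j, qIdeal (K := K) (A j) (w j)) ^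
            (sSup {m : ℕ | ∃ j, i0 ∈ A j ∧ m = w j i0} /
              sInf {m : ℕ | ∃ j, i0 ∈ A j ∧ m = w j i0} + 1)) := by
  have hsep : ∀ i0 j j', i0 ∈ A j → i0 ∈ A j' → w j i0 < w j' i0 →
      ∀ j'', j'' ≠ j → j'' ≠ j' → ¬ A j'' ⊆ A j ∪ A j' := by
    intro i0 j j' hj hj' hlt j'' h h' hsub
    rcases lt_or_gt_of_ne (show j ≠ j' by rintro rfl; exact hlt.false) with hjj' | hjj'
    · exact hcond _ _ ⟨hjj', i0, hj, hj', hlt.ne⟩ j'' h h' (by exact_mod_cast hsub)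
    · exact hcond _ _ ⟨hjj', i0, hj', hj, hlt.ne'⟩ j'' h' h
        (by rw [Set.union_comm]; exact_mod_cast hsub)
  have hnot_le (k l : Fin r) (i0 : Fin n) (_ : k < l) (hk : i0 ∈ A k) (hl : i0 ∈ A l)
      (hne : w k i0 ≠ w l i0) :=
    not_iInf_qIdeal_pow_le_pow_of_weight_ne (K := K) hwpos hnoemb (hsep i0) hk hl hne
  obtain ⟨k, l, hkl, i0, hk, hl, hne⟩ := hX
  exact ⟨⟨_, le_add_self, hnot_le k l i0 hkl hk hl hne⟩, hnot_le⟩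

/-- if `X_I ≠ ∅` and `A_j ⊄ A_k ∪ A_l` for all `(k,l) ∈ X_I` and
`j ∉ {k,l}`, then `I` is not Simis; in fact `I^{(α+1)} ⊄ I^{α+1}` where
`α = ⌊w₂/w₁⌋` for the min/max weights at a witnessing common vertex. -/
theorem not_simis_of_XI_nonempty {K : Type*} [Field K] {n r : ℕ}
    (A : Fin r → Finset (Fin n)) (w : Fin r → Fin n → ℕ)
    (hApos : ∀ j, (A j).Nonempty)
    (hwpos : ∀ j, ∀ i ∈ A j, 0 < w j i)
    (hnoemb : ∀ j k, A j ⊆ A k → j = k)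
    (hirr : ∀ j : Fin r,
      ¬ (⨅ k : {k : Fin r // k ≠ j}, qIdeal (K := K) (A k.1) (w k.1)) ≤ qIdeal (A j) (w j))
    (hX : ∃ k l : Fin r, k < l ∧ ∃ i, i ∈ A k ∧ i ∈ A l ∧ w k i ≠ w l i)
    (hcond : ∀ k l : Fin r, (k < l ∧ ∃ i, i ∈ A k ∧ i ∈ A l ∧ w k i ≠ w l i) →
      ∀ j, j ≠ k → j ≠ l → ¬ (↑(A j) : Set (Fin n)) ⊆ ↑(A k) ∪ ↑(A l)) :
    (∃ s : ℕ, 1 ≤ s ∧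
      ¬ (⨅ j, (qIdeal (K := K) (A j) (w j)) ^ s) ≤ (⨅ j, qIdeal (K := K) (A j) (w j)) ^ s) ∧
    (∀ k l : Fin r, ∀ i0 : Fin n, k < l → i0 ∈ A k → i0 ∈ A l → w k i0 ≠ w l i0 →
      ¬ (⨅ j, (qIdeal (K := K) (A j) (w j)) ^
            (sSup {m : ℕ | ∃ j, i0 ∈ A j ∧ m = w j i0} /
              sInf {m : ℕ | ∃ j, i0 ∈ A j ∧ m = w j i0} + 1)) ≤
          (⨅ j, qIdeal (K := K) (A j) (w j)) ^
            (sSup {m : ℕ | ∃ j, i0 ∈ A j ∧ m = w j i0} /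
              sInf {m : ℕ | ∃ j, i0 ∈ A j ∧ m = w j i0} + 1)) :=
  not_simis_of_XI_nonempty_general A w hwpos hnoemb hX hcond
end

section
/- Let $\mathfrak{q}_1 = \langle x_{i_0}^{w_1}, x_{i_1}^{u}\rangle$ and $\mathfrak{q}_s = \langle x_{i_0}^{w_2}, x_{i_s}^{v}\rangle$ be height-two irreducible monomial ideals in $K[x_1,\dots,x_n]$ with $i_0, i_1, i_s$ distinct and $2w_1 \le w_2$. Then $(\mathfrak{q}_1 \cap \mathfrak{q}_s)^2 = \langle x_{i_0}^{2w_2},\; x_{i_0}^{w_1+w_2} x_{i_s}^{v},\; x_{i_0}^{w_2} x_{i_1}^{u} x_{i_s}^{v},\; x_{i_0}^{2w_1} x_{i_s}^{2v},\; x_{i_0}^{w_1} x_{i_1}^{u} x_{i_s}^{2v},\; x_{i_1}^{2u} x_{i_s}^{2v}\rangle$, and the monomial $x_{i_0}^{w_2} x_{i_s}^{v}$ does not belong to $(\mathfrak{q}_1 \cap \mathfrak{q}_s)^2$. -/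
open MvPolynomial Finset

open Finsupp in
private lemma add_single_le' {n : ℕ} {i j : Fin n} (hij : i ≠ j) (a b : ℕ) (m : Fin n →₀ ℕ) :
    Finsupp.single i a + Finsupp.single j b ≤ m ↔ a ≤ m i ∧ b ≤ m j := by
  rw [Finsupp.le_def]
  constructor
  · intro h
    exact ⟨by simpa [Finsupp.single_apply, hij.symm] using h i,
      by simpa [Finsupp.single_apply, hij] using h j⟩
  · rintro ⟨h1, h2⟩ x
    simp only [Finsupp.add_apply, Finsupp.single_apply]
    split_ifs with hx hy hy <;> subst_vars <;> omega

private lemma pair_as_image' {K : Type*} [Field K] {n : ℕ} (i j : Fin n) (a b : ℕ) :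
    ({(X i : MvPolynomial (Fin n) K) ^ a, X j ^ b} : Set (MvPolynomial (Fin n) K)) =
      (fun s => monomial s (1 : K)) '' {Finsupp.single i a, Finsupp.single j b} := by
  rw [Set.image_pair]
  simp [X_pow_eq_monomial]

private lemma inter_key' {K : Type*} [Field K] {n : ℕ}
    (i0 i1 is : Fin n) (h0s : i0 ≠ is) (h1s : i1 ≠ is)
    (w1 w2 u v : ℕ) (hw : w1 ≤ w2) :
    (Ideal.span {(X i0 : MvPolynomial (Fin n) K) ^ w1, X i1 ^ u} ⊓
        Ideal.span {(X i0 : MvPolynomial (Fin n) K) ^ w2, X is ^ v}) =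
      Ideal.span ((fun s => monomial s (1 : K)) ''
        {Finsupp.single i0 w2, Finsupp.single i0 w1 + Finsupp.single is v,
         Finsupp.single i1 u + Finsupp.single is v}) := by
  ext p
  rw [Ideal.mem_inf, pair_as_image', pair_as_image', mem_ideal_span_monomial_image,
    mem_ideal_span_monomial_image, mem_ideal_span_monomial_image]
  constructor
  · rintro ⟨hA, hB⟩ m hm
    obtain ⟨sa, hsa, hlea⟩ := hA m hm
    obtain ⟨sb, hsb, hleb⟩ := hB m hm
    simp only [Set.mem_insert_iff, Set.mem_singleton_iff] at hsa hsb
    rcases hsa with rfl | rfl <;> rcases hsb with rfl | rfl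
    · exact ⟨Finsupp.single i0 w2, by simp, hleb⟩
    · exact ⟨Finsupp.single i0 w1 + Finsupp.single is v, by simp,
        (add_single_le' h0s _ _ m).mpr ⟨Finsupp.single_le_iff.mp hlea, Finsupp.single_le_iff.mp hleb⟩⟩
    · exact ⟨Finsupp.single i0 w2, by simp, hleb⟩
    · exact ⟨Finsupp.single i1 u + Finsupp.single is v, by simp,
        (add_single_le' h1s _ _ m).mpr ⟨Finsupp.single_le_iff.mp hlea, Finsupp.single_le_iff.mp hleb⟩⟩
  · intro h
    constructor <;> intro m hm <;> obtain ⟨s, hs, hle⟩ := h m hm <;>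
      simp only [Set.mem_insert_iff, Set.mem_singleton_iff] at hs
    · rcases hs with rfl | rfl | rfl
      · exact ⟨Finsupp.single i0 w1, by simp,
          Finsupp.single_le_iff.mpr (le_trans hw (Finsupp.single_le_iff.mp hle))⟩
      · exact ⟨Finsupp.single i0 w1, by simp,
          Finsupp.single_le_iff.mpr ((add_single_le' h0s _ _ m).mp hle).1⟩
      · exact ⟨Finsupp.single i1 u, by simp,
          Finsupp.single_le_iff.mpr ((add_single_le' h1s _ _ m).mp hle).1⟩
    · rcases hs with rfl | rfl | rfl
      · exact ⟨Finsupp.single i0 w2, by simp, hle⟩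
      · exact ⟨Finsupp.single is v, by simp,
          Finsupp.single_le_iff.mpr ((add_single_le' h0s _ _ m).mp hle).2⟩
      · exact ⟨Finsupp.single is v, by simp,
          Finsupp.single_le_iff.mpr ((add_single_le' h1s _ _ m).mp hle).2⟩

private lemma image_three' {K : Type*} [Field K] {n : ℕ} (i0 i1 is : Fin n)
    (w1 w2 u v : ℕ) :
    ((fun s => monomial s (1 : K)) ''
        {Finsupp.single i0 w2, Finsupp.single i0 w1 + Finsupp.single is v,
         Finsupp.single i1 u + Finsupp.single is v}) =
      {(X i0 : MvPolynomial (Fin n) K) ^ w2, X i0 ^ w1 * X is ^ v, X i1 ^ u * X is ^ v} := by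
  simp [Set.image_insert_eq, X_pow_eq_monomial, monomial_mul]

private lemma square_three' {K : Type*} [Field K] {n : ℕ} (i0 i1 is : Fin n) (w1 w2 u v : ℕ) :
    (Ideal.span {(X i0 : MvPolynomial (Fin n) K) ^ w2, X i0 ^ w1 * X is ^ v,
        X i1 ^ u * X is ^ v}) ^ 2 =
    Ideal.span {(X i0 : MvPolynomial (Fin n) K) ^ (2 * w2),
        X i0 ^ (w1 + w2) * X is ^ v,
        X i0 ^ w2 * X i1 ^ u * X is ^ v,
        X i0 ^ (2 * w1) * X is ^ (2 * v),
        X i0 ^ w1 * X i1 ^ u * X is ^ (2 * v),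
        X i1 ^ (2 * u) * X is ^ (2 * v)} := by
  rw [pow_two, Ideal.span_mul_span']
  apply le_antisymm
  · rw [Ideal.span_le]
    rintro p hp
    rw [Set.mem_mul] at hp
    obtain ⟨a, ha, b, hb, rfl⟩ := hp
    simp only [Set.mem_insert_iff, Set.mem_singleton_iff] at ha hb
    rcases ha with rfl | rfl | rfl <;> rcases hb with rfl | rfl | rfl <;>
      apply Ideal.subset_span <;>
      simp only [Set.mem_insert_iff, Set.mem_singleton_iff] <;> ring_nf <;> tauto
  · rw [Ideal.span_le]
    rintro p hp
    simp only [Set.mem_insert_iff, Set.mem_singleton_iff] at hp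
    rcases hp with rfl | rfl | rfl | rfl | rfl | rfl
    · rw [show (X i0 : MvPolynomial (Fin n) K) ^ (2*w2) = X i0 ^ w2 * X i0 ^ w2 by ring]
      exact Ideal.subset_span (Set.mul_mem_mul (by simp) (by simp))
    · rw [show (X i0 : MvPolynomial (Fin n) K) ^ (w1+w2) * X is ^ v
          = X i0 ^ w2 * (X i0 ^ w1 * X is ^ v) by ring]
      exact Ideal.subset_span (Set.mul_mem_mul (by simp) (by simp))
    · rw [show (X i0 : MvPolynomial (Fin n) K) ^ w2 * X i1 ^ u * X is ^ v
          = X i0 ^ w2 * (X i1 ^ u * X is ^ v) by ring]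
      exact Ideal.subset_span (Set.mul_mem_mul (by simp) (by simp))
    · rw [show (X i0 : MvPolynomial (Fin n) K) ^ (2*w1) * X is ^ (2*v)
          = (X i0 ^ w1 * X is ^ v) * (X i0 ^ w1 * X is ^ v) by ring]
      exact Ideal.subset_span (Set.mul_mem_mul (by simp) (by simp))
    · rw [show (X i0 : MvPolynomial (Fin n) K) ^ w1 * X i1 ^ u * X is ^ (2*v)
          = (X i0 ^ w1 * X is ^ v) * (X i1 ^ u * X is ^ v) by ring]
      exact Ideal.subset_span (Set.mul_mem_mul (by simp) (by simp))
    · rw [show (X i1 : MvPolynomial (Fin n) K) ^ (2*u) * X is ^ (2*v)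
          = (X i1 ^ u * X is ^ v) * (X i1 ^ u * X is ^ v) by ring]
      exact Ideal.subset_span (Set.mul_mem_mul (by simp) (by simp))

private lemma not_mem_six' {K : Type*} [Field K] {n : ℕ}
    (i0 i1 is : Fin n) (h01 : i0 ≠ i1) (h0s : i0 ≠ is) (h1s : i1 ≠ is)
    (w1 w2 u v : ℕ) (hw1 : 0 < w1) (hw2 : 0 < w2) (hu : 0 < u) (hv : 0 < v) :
    (X i0 : MvPolynomial (Fin n) K) ^ w2 * X is ^ v ∉
    Ideal.span {(X i0 : MvPolynomial (Fin n) K) ^ (2 * w2),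
        X i0 ^ (w1 + w2) * X is ^ v,
        X i0 ^ w2 * X i1 ^ u * X is ^ v,
        X i0 ^ (2 * w1) * X is ^ (2 * v),
        X i0 ^ w1 * X i1 ^ u * X is ^ (2 * v),
        X i1 ^ (2 * u) * X is ^ (2 * v)} := by
  have himg : ({(X i0 : MvPolynomial (Fin n) K) ^ (2 * w2),
        X i0 ^ (w1 + w2) * X is ^ v,
        X i0 ^ w2 * X i1 ^ u * X is ^ v,
        X i0 ^ (2 * w1) * X is ^ (2 * v),
        X i0 ^ w1 * X i1 ^ u * X is ^ (2 * v),
        X i1 ^ (2 * u) * X is ^ (2 * v)} : Set (MvPolynomial (Fin n) K)) =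
      (fun s => monomial s (1 : K)) ''
        {Finsupp.single i0 (2 * w2),
         Finsupp.single i0 (w1 + w2) + Finsupp.single is v,
         Finsupp.single i0 w2 + Finsupp.single i1 u + Finsupp.single is v,
         Finsupp.single i0 (2 * w1) + Finsupp.single is (2 * v),
         Finsupp.single i0 w1 + Finsupp.single i1 u + Finsupp.single is (2 * v),
         Finsupp.single i1 (2 * u) + Finsupp.single is (2 * v)} := by
    simp [Set.image_insert_eq, X_pow_eq_monomial, monomial_mul]
  rw [himg, show (X i0 : MvPolynomial (Fin n) K) ^ w2 * X is ^ v =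
      monomial (Finsupp.single i0 w2 + Finsupp.single is v) (1 : K) by
    simp [X_pow_eq_monomial, monomial_mul]]
  intro hmem
  rw [mem_ideal_span_monomial_image] at hmem
  obtain ⟨t, ht, hle⟩ := hmem (Finsupp.single i0 w2 + Finsupp.single is v)
    (by classical rw [support_monomial]; simp)
  simp only [Set.mem_insert_iff, Set.mem_singleton_iff] at ht
  rcases ht with rfl | rfl | rfl | rfl | rfl | rfl
  · have := Finsupp.le_def.mp hle i0
    simp [Finsupp.single_apply, h01, h0s, h1s, h01.symm, h0s.symm, h1s.symm] at this; omega
  · have := Finsupp.le_def.mp hle i0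
    simp [Finsupp.single_apply, h01, h0s, h1s, h01.symm, h0s.symm, h1s.symm] at this; omega
  · have := Finsupp.le_def.mp hle i1
    simp [Finsupp.single_apply, h01, h0s, h1s, h01.symm, h0s.symm, h1s.symm] at this; omega
  · have := Finsupp.le_def.mp hle is
    simp [Finsupp.single_apply, h01, h0s, h1s, h01.symm, h0s.symm, h1s.symm] at this; omega
  · have := Finsupp.le_def.mp hle i1
    simp [Finsupp.single_apply, h01, h0s, h1s, h01.symm, h0s.symm, h1s.symm] at this; omega
  · have := Finsupp.le_def.mp hle i1
    simp [Finsupp.single_apply, h01, h0s, h1s, h01.symm, h0s.symm, h1s.symm] at this; omega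

/-- explicit description of `(𝔮₁ ∩ 𝔮ₛ)²` for two height-two irreducible
monomial ideals with `2w₁ ≤ w₂`, and non-membership of `x_{i₀}^{w₂} x_{i_s}^{v}`. -/
theorem square_of_intersection_height_two {K : Type*} [Field K] {n : ℕ}
    (i0 i1 is : Fin n) (h01 : i0 ≠ i1) (h0s : i0 ≠ is) (h1s : i1 ≠ is)
    (w1 w2 u v : ℕ) (hw1 : 0 < w1) (hw2 : 0 < w2) (hu : 0 < u) (hv : 0 < v)
    (h2 : 2 * w1 ≤ w2) :
    ((Ideal.span {(X i0 : MvPolynomial (Fin n) K) ^ w1, X i1 ^ u} ⊓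
        Ideal.span {(X i0 : MvPolynomial (Fin n) K) ^ w2, X is ^ v}) ^ 2 =
      Ideal.span {(X i0 : MvPolynomial (Fin n) K) ^ (2 * w2),
        X i0 ^ (w1 + w2) * X is ^ v,
        X i0 ^ w2 * X i1 ^ u * X is ^ v,
        X i0 ^ (2 * w1) * X is ^ (2 * v),
        X i0 ^ w1 * X i1 ^ u * X is ^ (2 * v),
        X i1 ^ (2 * u) * X is ^ (2 * v)}) ∧
    (X i0 : MvPolynomial (Fin n) K) ^ w2 * X is ^ v ∉
      (Ideal.span {(X i0 : MvPolynomial (Fin n) K) ^ w1, X i1 ^ u} ⊓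
        Ideal.span {(X i0 : MvPolynomial (Fin n) K) ^ w2, X is ^ v}) ^ 2 := by
  have hw : w1 ≤ w2 := by omega
  have key := inter_key' (K := K) i0 i1 is h0s h1s w1 w2 u v hw
  rw [key, image_three', square_three']
  exact ⟨rfl, not_mem_six' i0 i1 is h01 h0s h1s w1 w2 u v hw1 hw2 hu hv⟩
end

section
/- Let $I \subset K[x_1,\dots,x_n]$ be a monomial ideal with a standard linear weighting, i.e., $I = J_w$ for a squarefree monomial ideal $J$ and standard linear weighting $w$, and let $h$ be the big-height of $I$. Then $\hat{\alpha}(I) \ge \dfrac{\alpha(I) + h - 1}{h}$. -/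
open MvPolynomial Finset

/-!
Fix `s ≥ 1` and a monomial `x^m` of least degree in `⋂_j Q_j^s`, where
`Q_j = ⟨x_i^{w_i} : i ∈ A_j⟩`. Membership in `Q_j^s` forces `∑_{i ∈ A_j} ⌊m_i / w_i⌋ ≥ s`, so
`y_i = ⌊m_i / w_i⌋ / s` is a fractional cover of the hypergraph `{A_j}` whose `w`-weight is at most
`deg m / s`. On the other side, `x^{w·1_T} ∈ I` for every transversal `T` of the hypergraph, so
`α(I)` is at most the `w`-weight of any transversal. A greedy argument turns a fractional cover
into a transversal: some vertex `v` of an edge has `y_v ≥ 1/h`; put `v` into the transversal and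
delete the edges through `v`. With weights `≥ 1` this bounds the least weight of a transversal by
`h c - h + 1`, where `c` is the weight of the cover, i.e. `(α(I) + h - 1) / h ≤ α(⋂_j Q_j^s) / s`.
-/

section FractionalCover

variable {ι κ : Type*} {w y : ι → ℝ} {h : ℕ}

lemma exists_inv_le_of_one_le_sum {B : Finset ι} (hcard : #B ≤ h) (hB : 1 ≤ ∑ i ∈ B, y i) :
    ∃ v ∈ B, 1 / (h : ℝ) ≤ y v := by
  refine exists_le_of_sum_le (nonempty_of_sum_ne_zero (f := y) (by linarith)) ?_
  calc ∑ _i ∈ B, 1 / (h : ℝ) = #B / h := by simp [div_eq_mul_inv]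
    _ ≤ 1 := div_le_one_of_le₀ (by exact_mod_cast hcard) (Nat.cast_nonneg _)
    _ ≤ _ := hB

lemma one_add_div_le_sum_mul {V B : Finset ι} (hBV : B ⊆ V) (hw : ∀ i ∈ V, 1 ≤ w i)
    (hy : ∀ i ∈ V, 0 ≤ y i) (hB : 1 ≤ ∑ i ∈ B, y i) {v : ι} (hv : v ∈ B)
    (hyv : 1 / (h : ℝ) ≤ y v) :
    1 + (w v - 1) / h ≤ ∑ i ∈ V, w i * y i := by
  calc 1 + (w v - 1) / h = 1 + (w v - 1) * (1 / h) := by ring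
    _ ≤ ∑ i ∈ B, y i + (w v - 1) * y v := by gcongr; linarith [hw v (hBV hv)]
    _ ≤ ∑ i ∈ B, y i + ∑ i ∈ B, (w i - 1) * y i := by
        gcongr
        exact single_le_sum (f := fun i => (w i - 1) * y i)
          (fun i hi => mul_nonneg (by linarith [hw i (hBV hi)]) (hy i (hBV hi))) hv
    _ = ∑ i ∈ B, w i * y i := by rw [← sum_add_distrib]; congr 1 with i; ring
    _ ≤ ∑ i ∈ V, w i * y i := sum_le_sum_of_subset_of_nonneg hBV
        fun i hi _ => mul_nonneg (by linarith [hw i hi]) (hy i hi)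

lemma sum_insert_le_add_sum {M : Type*} [AddCommMonoid M] [PartialOrder M] [IsOrderedAddMonoid M]
    [DecidableEq ι] {f : ι → M} (s : Finset ι) {a : ι} (ha : 0 ≤ f a) :
    ∑ i ∈ insert a s, f i ≤ f a + ∑ i ∈ s, f i := by
  by_cases has : a ∈ s
  · rw [insert_eq_of_mem has]
    exact le_add_of_nonneg_left ha
  · exact (sum_insert has).le

theorem div_le_sum_mul_of_fractional_cover [DecidableEq ι] (A : κ → Finset ι) (J : Finset κ)
    (V : Finset ι) (hAV : ∀ j ∈ J, A j ⊆ V) (hJ : J.Nonempty) (hcard : ∀ j ∈ J, #(A j) ≤ h)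
    (hw : ∀ i ∈ V, 1 ≤ w i) (hy : ∀ i ∈ V, 0 ≤ y i) (hcover : ∀ j ∈ J, 1 ≤ ∑ i ∈ A j, y i)
    (τ : ℝ) (hτ : ∀ T : Finset ι, (∀ j ∈ J, (A j ∩ T).Nonempty) → τ ≤ ∑ i ∈ T, w i) :
    (τ + h - 1) / h ≤ ∑ i ∈ V, w i * y i := by
  induction J using Finset.strongInduction generalizing V τ with
  | H J ih =>
  obtain ⟨j₀, hj₀⟩ := hJ
  obtain ⟨v, hvA, hyv⟩ := exists_inv_le_of_one_le_sum (hcard j₀ hj₀) (hcover j₀ hj₀)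
  have hvV := hAV j₀ hj₀ hvA
  have hwv : 0 ≤ w v := by linarith [hw v hvV]
  rcases (J.filter (v ∉ A ·)).eq_empty_or_nonempty with hJ' | hJ'
  · have hvA' : ∀ j ∈ J, v ∈ A j := by simpa using filter_eq_empty_iff.1 hJ'
    have hτv : τ ≤ w v := by
      simpa using hτ {v} fun j hj => ⟨v, mem_inter.2 ⟨hvA' j hj, mem_singleton_self v⟩⟩
    have hh : (h : ℝ) ≠ 0 :=
      Nat.cast_ne_zero.2 ((card_pos.2 ⟨v, hvA⟩).trans_le (hcard j₀ hj₀)).ne'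
    calc (τ + h - 1) / h ≤ (w v + h - 1) / h := by gcongr
      _ = 1 + (w v - 1) / h := by field_simp; ring
      _ ≤ _ := one_add_div_le_sum_mul (hAV j₀ hj₀) hw hy (hcover j₀ hj₀) hvA hyv
  · have hτ' : ∀ T : Finset ι, (∀ j ∈ J.filter (v ∉ A ·), (A j ∩ T).Nonempty) →
        τ - w v ≤ ∑ i ∈ T, w i := by
      intro T hT
      have hT' : ∀ j ∈ J, (A j ∩ insert v T).Nonempty := fun j hj => by
        by_cases hvj : v ∈ A j
        · exact ⟨v, by simp [hvj]⟩
        · exact (hT j (by simp [hj, hvj])).mono (inter_subset_inter_left (subset_insert v T))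
      linarith [hτ _ hT', sum_insert_le_add_sum T hwv]
    have hrest := ih _ (filter_ssubset.2 ⟨j₀, hj₀, by simpa using hvA⟩) (V.erase v)
      (fun j hj x hx => mem_erase.2
        ⟨ne_of_mem_of_not_mem hx (mem_filter.1 hj).2, hAV j (mem_filter.1 hj).1 hx⟩)
      hJ' (fun j hj => hcard j (mem_filter.1 hj).1) (fun i hi => hw i (mem_of_mem_erase hi))
      (fun i hi => hy i (mem_of_mem_erase hi)) (fun j hj => hcover j (mem_filter.1 hj).1)
      (τ - w v) hτ'
    calc (τ + h - 1) / h = (τ - w v + h - 1) / h + w v * (1 / h) := by ring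
      _ ≤ ∑ i ∈ V.erase v, w i * y i + w v * y v := by gcongr
      _ = ∑ i ∈ V, w i * y i := sum_erase_add V _ hvV

end FractionalCover

section Monomials

variable {K R σ : Type*} [Field K] [CommSemiring R]

lemma alphaI_le_degree {L : Ideal (MvPolynomial σ K)} {m : σ →₀ ℕ}
    (hm : monomial m (1 : K) ∈ L) : alphaI L ≤ m.degree := by
  unfold alphaI
  exact Nat.sInf_le ⟨m, rfl, hm⟩

lemma exists_degree_eq_alphaI {L : Ideal (MvPolynomial σ K)}
    (hL : ∃ m : σ →₀ ℕ, monomial m (1 : K) ∈ L) :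
    ∃ m : σ →₀ ℕ, m.degree = alphaI L ∧ monomial m (1 : K) ∈ L := by
  obtain ⟨m, hm⟩ := hL
  have hne : {d | ∃ m : σ →₀ ℕ, (m.sum fun _ e => e) = d ∧ monomial m (1 : K) ∈ L}.Nonempty :=
    ⟨_, m, rfl, hm⟩
  exact Nat.sInf_mem hne

/-- For `w > 0` on `A`, the largest `s` with `x^μ ∈ ⟨x_i^{w_i} : i ∈ A⟩^s`. -/
def qOrder (A : Finset σ) (w : σ → ℕ) (μ : σ →₀ ℕ) : ℕ :=
  ∑ i ∈ A, μ i / w i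

lemma qOrder_add_le (A : Finset σ) (w : σ → ℕ) (μ ν : σ →₀ ℕ) :
    qOrder A w μ + qOrder A w ν ≤ qOrder A w (μ + ν) := by
  rw [qOrder, qOrder, qOrder, ← sum_add_distrib]
  exact sum_le_sum fun i _ => Nat.div_add_div_le_add_div

variable (R) in
noncomputable def qOrderIdeal (A : Finset σ) (w : σ → ℕ) (s : ℕ) : Ideal (MvPolynomial σ R) :=
  Ideal.span ((fun μ => monomial μ (1 : R)) '' {μ | s ≤ qOrder A w μ})

lemma qOrderIdeal_zero (A : Finset σ) (w : σ → ℕ) : qOrderIdeal R A w 0 = ⊤ :=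
  (Ideal.eq_top_iff_one _).2 <| by
    rw [← C_1, ← monomial_zero']
    exact Ideal.subset_span ⟨0, Nat.zero_le _, rfl⟩

lemma qOrderIdeal_mul_le (A : Finset σ) (w : σ → ℕ) (a b : ℕ) :
    qOrderIdeal R A w a * qOrderIdeal R A w b ≤ qOrderIdeal R A w (a + b) := by
  rw [qOrderIdeal, qOrderIdeal, Ideal.span_mul_span', Ideal.span_le]
  rintro _ ⟨_, ⟨μ, hμ, rfl⟩, _, ⟨ν, hν, rfl⟩, rfl⟩
  simp only [monomial_mul, one_mul]
  exact Ideal.subset_span ⟨μ + ν, (add_le_add hμ hν).trans (qOrder_add_le A w μ ν), rfl⟩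

end Monomials

section Weighted

variable {K : Type*} [Field K] {n : ℕ}

lemma qIdeal_le_qOrderIdeal_one {A : Finset (Fin n)} {w : Fin n → ℕ} (hw : ∀ i ∈ A, 0 < w i) :
    qIdeal A w ≤ qOrderIdeal K A w 1 := by
  rw [qIdeal, Ideal.span_le]
  rintro _ ⟨i, hi, rfl⟩
  refine Ideal.subset_span ⟨Finsupp.single i (w i), ?_, X_pow_eq_monomial.symm⟩
  calc 1 = Finsupp.single i (w i) i / w i := by simp [Nat.div_self (hw i hi)]
    _ ≤ qOrder A w (Finsupp.single i (w i)) :=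
      single_le_sum (f := fun k => Finsupp.single i (w i) k / w k) (fun _ _ => Nat.zero_le _) hi

lemma qIdeal_pow_le_qOrderIdeal {A : Finset (Fin n)} {w : Fin n → ℕ} (hw : ∀ i ∈ A, 0 < w i)
    (s : ℕ) : qIdeal A w ^ s ≤ qOrderIdeal K A w s := by
  induction s with
  | zero => simp [qOrderIdeal_zero]
  | succ s ih =>
    rw [pow_succ]
    exact (Ideal.mul_mono ih (qIdeal_le_qOrderIdeal_one hw)).trans (qOrderIdeal_mul_le A w s 1)

lemma le_qOrder_of_monomial_mem_qIdeal_pow {A : Finset (Fin n)} {w : Fin n → ℕ}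
    (hw : ∀ i ∈ A, 0 < w i) {s : ℕ} {m : Fin n →₀ ℕ}
    (hm : monomial m (1 : K) ∈ qIdeal A w ^ s) : s ≤ qOrder A w m := by
  have hm' := qIdeal_pow_le_qOrderIdeal hw s hm
  rw [qOrderIdeal, mem_ideal_span_monomial_image] at hm'
  obtain ⟨μ, hμ, hle⟩ := hm' m (by simp)
  exact hμ.trans (sum_le_sum fun i _ => Nat.div_le_div_right (hle i))

lemma mon_indicator_mem_qIdeal {A T : Finset (Fin n)} (w : Fin n → ℕ) (hAT : (A ∩ T).Nonempty) :
    mon (K := K) ((T : Set (Fin n)).indicator w) ∈ qIdeal A w := by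
  obtain ⟨u, hu⟩ := hAT
  rw [mem_inter] at hu
  refine Ideal.mem_of_dvd _ (a := X u ^ w u) ?_ (Ideal.subset_span ⟨u, hu.1, rfl⟩)
  rw [X_pow_eq_monomial, mon, monomial_dvd_monomial, Finsupp.single_le_iff]
  simp [hu.2]

lemma alphaI_wIdeal_le {ι : Type*} {A : ι → Finset (Fin n)} (w : Fin n → ℕ) {T : Finset (Fin n)}
    (hT : ∀ j, (A j ∩ T).Nonempty) :
    alphaI (wIdeal w (⨅ j, qIdeal (K := K) (A j) (fun _ => 1))) ≤ ∑ i ∈ T, w i := by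
  have hJ : mon (K := K) ((T : Set (Fin n)).indicator 1) ∈ ⨅ j, qIdeal (K := K) (A j) fun _ => 1 :=
    Ideal.mem_iInf.2 fun j => mon_indicator_mem_qIdeal _ (hT j)
  have hI : mon (fun i => w i * (T : Set (Fin n)).indicator 1 i) ∈
      wIdeal w (⨅ j, qIdeal (K := K) (A j) fun _ => 1) :=
    Ideal.subset_span ⟨_, hJ, rfl⟩
  refine (alphaI_le_degree hI).trans_eq ?_
  simp [Finsupp.degree_eq_sum, Set.indicator_apply]

end Weighted

theorem div_le_alphaI_iInf_qIdeal_pow_div {K ι : Type*} [Field K] [Fintype ι] [Nonempty ι]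
    {n : ℕ} {A : ι → Finset (Fin n)} {w : Fin n → ℕ} (hw : ∀ i, 0 < w i)
    (hA : ∀ j, (A j).Nonempty) {h : ℕ} (hcard : ∀ j, #(A j) ≤ h) {τ : ℝ}
    (hτ : ∀ T : Finset (Fin n), (∀ j, (A j ∩ T).Nonempty) → τ ≤ ∑ i ∈ T, (w i : ℝ))
    {s : ℕ} (hs : 0 < s) :
    (τ + h - 1) / h ≤ alphaI (⨅ j, qIdeal (K := K) (A j) w ^ s) / s := by
  have hmon : ∃ m : Fin n →₀ ℕ, monomial m (1 : K) ∈ ⨅ j, qIdeal (A j) w ^ s := by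
    refine ⟨s • Finsupp.equivFunOnFinite.symm (((univ : Finset (Fin n)) : Set (Fin n)).indicator w),
      Ideal.mem_iInf.2 fun j => ?_⟩
    rw [← one_pow s, ← monomial_pow]
    exact Ideal.pow_mem_pow (mon_indicator_mem_qIdeal w (by simpa using hA j)) s
  obtain ⟨m, hdeg, hm⟩ := exists_degree_eq_alphaI hmon
  have hs' : (0 : ℝ) < s := by exact_mod_cast hs
  set y : Fin n → ℝ := fun i => ((m i / w i : ℕ) : ℝ) / s
  have hcover : ∀ j ∈ univ, 1 ≤ ∑ i ∈ A j, y i := fun j _ => by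
    rw [← sum_div, le_div_iff₀ hs', one_mul]
    exact_mod_cast le_qOrder_of_monomial_mem_qIdeal_pow (fun i _ => hw i) (Ideal.mem_iInf.1 hm j)
  calc (τ + h - 1) / h ≤ ∑ i, (w i : ℝ) * y i :=
        div_le_sum_mul_of_fractional_cover A univ univ (fun _ _ => subset_univ _) univ_nonempty
          (fun j _ => hcard j) (fun i _ => by exact_mod_cast hw i)
          (fun i _ => by positivity) hcover τ fun T hT => hτ T fun j => hT j (mem_univ j)
    _ = ((∑ i, w i * (m i / w i) : ℕ) : ℝ) / s := by
        push_cast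
        rw [sum_div]
        simp only [y, mul_div_assoc]
    _ ≤ alphaI (⨅ j, qIdeal (K := K) (A j) w ^ s) / s := by
        rw [← hdeg, Finsupp.degree_eq_sum]
        gcongr
        exact_mod_cast Nat.mul_div_le (m i) (w i)

theorem waldschmidt_lower_bound_weighted_general {K : Type*} [Field K] {n r : ℕ} (hr : 0 < r)
    (A : Fin r → Finset (Fin n)) (w : Fin n → ℕ) (hw : ∀ i, 0 < w i)
    (hApos : ∀ j, (A j).Nonempty)
    (h : ℕ) (hh : h = Finset.univ.sup fun j => (A j).card)
    (I : Ideal (MvPolynomial (Fin n) K))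
    (hI : I = wIdeal w (⨅ j, qIdeal (K := K) (A j) (fun _ => 1))) :
    ∀ L : ℝ,
      Filter.Tendsto (fun s : ℕ => (alphaI (⨅ j, (qIdeal (K := K) (A j) w) ^ s) : ℝ) / s)
        Filter.atTop (nhds L) →
      ((alphaI I : ℝ) + h - 1) / h ≤ L := by
  intro L hL
  have : Nonempty (Fin r) := ⟨⟨0, hr⟩⟩
  have hcard : ∀ j, #(A j) ≤ h := fun j => hh ▸ le_sup (f := fun j => #(A j)) (mem_univ j)
  have hτ : ∀ T : Finset (Fin n), (∀ j, (A j ∩ T).Nonempty) →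
      (alphaI I : ℝ) ≤ ∑ i ∈ T, (w i : ℝ) := fun T hT => by
    rw [hI]
    exact_mod_cast alphaI_wIdeal_le w hT
  refine ge_of_tendsto hL (Filter.eventually_atTop.2 ⟨1, fun s hs => ?_⟩)
  exact div_le_alphaI_iInf_qIdeal_pow_div hw hApos hcard hτ hs

/-- Chudnovsky-type bound `α̂(I) ≥ (α(I) + h - 1)/h` for a monomial ideal
with a standard linear weighting, where `h` is the big-height. -/
theorem waldschmidt_lower_bound_weighted {K : Type*} [Field K] {n r : ℕ} (hr : 0 < r)
    (A : Fin r → Finset (Fin n)) (w : Fin n → ℕ) (hw : ∀ i, 0 < w i)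
    (hApos : ∀ j, (A j).Nonempty)
    (hnoemb : ∀ j k, A j ⊆ A k → j = k)
    (h : ℕ) (hh : h = Finset.univ.sup fun j => (A j).card)
    (I : Ideal (MvPolynomial (Fin n) K))
    (hI : I = wIdeal w (⨅ j, qIdeal (K := K) (A j) (fun _ => 1))) :
    ∀ L : ℝ,
      Filter.Tendsto (fun s : ℕ => (alphaI (⨅ j, (qIdeal (K := K) (A j) w) ^ s) : ℝ) / s)
        Filter.atTop (nhds L) →
      ((alphaI I : ℝ) + h - 1) / h ≤ L :=
  waldschmidt_lower_bound_weighted_general hr A w hw hApos h hh I hI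
end
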